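/- arXiv:0802.3771 — 14 statements merged into one kernel-verified Lean document; each statement's English description precedes it below -/
import Mathlib

section
/- Let A and X be real n×n matrices with ⁅X,⁅A,X⁆⁆ = 0 and ⁅A,⁅A,X⁆⁆ = 0 (as holds for elements of a 2-step nilpotent matrix Lie algebra). Then the derivative at t = 0 of the curve t ↦ exp(X + tA) equals exp(X)·(A + ½⁅A,X⁆). -/
attribute [local instance] Matrix.linftyOpNormedAddCommGroup Matrix.linftyOpNormedRing
  Matrix.linftyOpNormedAlgebra
open NormedSpace

variable {n : ℕ}

private lemma exp_mul_exp_neg' (M : Matrix (Fin n) (Fin n) ℝ) :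
    exp M * exp (-M) = 1 := by
  erw [← exp_add_of_commute (Commute.refl M).neg_right, add_neg_cancel, exp_zero]

private lemma exp_neg_mul_exp' (M : Matrix (Fin n) (Fin n) ℝ) :
    exp (-M) * exp M = 1 := by
  erw [← exp_add_of_commute (Commute.refl M).neg_left, neg_add_cancel, exp_zero]

private lemma conj_aux (Q P : Matrix (Fin n) (Fin n) ℝ) (h : Commute ⁅Q, P⁆ Q) (s : ℝ) :
    exp (s • Q) * P = (P + s • ⁅Q, P⁆) * exp (s • Q) := by
  set W := ⁅Q, P⁆ with hW
  -- φ s = exp(s•Q) * P * exp(s•(-Q)) - s•W  has derivative 0 everywhere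
  set φ : ℝ → Matrix (Fin n) (Fin n) ℝ :=
    fun s => exp (s • Q) * P * exp (s • (-Q)) - s • W with hφ
  have hder : ∀ s : ℝ, HasDerivAt φ 0 s := by
    intro s
    have h1 := (hasDerivAt_exp_smul_const Q s).mul_const P
    have h2 := hasDerivAt_exp_smul_const (-Q : Matrix (Fin n) (Fin n) ℝ) s
    have h3 := (h1.mul h2).sub ((hasDerivAt_id s).smul_const W)
    refine h3.congr_deriv (?_ : exp (s • Q) * Q * P * exp (s • (-Q))
        + exp (s • Q) * P * (exp (s • (-Q)) * -Q) - (1 : ℝ) • W = 0)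
    have cQ : Commute (exp (s • (-Q : Matrix (Fin n) (Fin n) ℝ))) Q :=
      (((Commute.refl Q).neg_left).smul_left s).exp_left
    have cW : Commute W (exp (s • Q)) := (h.smul_right s).exp_right
    have e1 : exp (s • Q) * P * (exp (s • (-Q)) * -Q)
        = -(exp (s • Q) * (P * Q) * exp (s • (-Q))) := by
      rw [mul_neg, cQ.eq]
      noncomm_ring
    have e2 : exp (s • Q) * Q * P * exp (s • (-Q))
        = exp (s • Q) * (Q * P) * exp (s • (-Q)) := by noncomm_ring
    rw [e1, e2]
    have hA : exp (s • Q) * (Q * P) * exp (s • (-Q))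
        - exp (s • Q) * (P * Q) * exp (s • (-Q))
        = exp (s • Q) * W * exp (s • (-Q)) := by
      rw [hW, Ring.lie_def]; noncomm_ring
    have hone : exp (s • Q) * exp (s • (-Q)) = 1 := by
      rw [smul_neg]; exact exp_mul_exp_neg' _
    have hB : exp (s • Q) * W * exp (s • (-Q)) = W := by
      rw [← cW.eq, mul_assoc, hone, mul_one]
    rw [one_smul, ← sub_eq_add_neg, hA, hB, sub_self]
  -- φ is constant, equal to φ 0 = P
  have hconst : ∀ s : ℝ, φ s = φ 0 :=
    fun s => is_const_of_deriv_eq_zero (fun x => (hder x).differentiableAt)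
      (fun x => (hder x).deriv) s 0
  have h0 : φ 0 = P := by simp [hφ]
  have hs := (hconst s).trans h0
  have hone : exp (s • (-Q)) * exp (s • Q) = 1 := by
    rw [smul_neg]; exact exp_neg_mul_exp' _
  have : (exp (s • Q) * P * exp (s • (-Q)) - s • W) * exp (s • Q)
      = (P + s • W - s • W) * exp (s • Q) := by
    rw [hφ] at hs
    simp only at hs
    rw [hs]; congr 1; abel
  rw [add_sub_cancel_right] at this
  calc exp (s • Q) * P
      = exp (s • Q) * P * (exp (s • (-Q)) * exp (s • Q)) := by rw [hone, mul_one]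
    _ = (exp (s • Q) * P * exp (s • (-Q)) - s • W) * exp (s • Q) + s • W * exp (s • Q) := by
        noncomm_ring
    _ = P * exp (s • Q) + s • W * exp (s • Q) := by rw [this]
    _ = (P + s • W) * exp (s • Q) := by noncomm_ring

private lemma ring_aux {R : Type*} [Ring R] [Module ℝ R] [SMulCommClass ℝ R R]
    [IsScalarTower ℝ R R] (e1 e2 e3 e4 p q w : R) (s : ℝ)
    (hpe2 : p * e2 = e2 * p - s • (w * e2))
    (hwe2 : w * e2 = e2 * w)
    (hpe3 : p * e3 = e3 * p) (hqe3 : q * e3 = e3 * q) (hwe3 : w * e3 = e3 * w)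
    (hme4 : (p + q) * e4 = e4 * (p + q)) (hwe4 : w * e4 = e4 * w) :
    ((e1 * p * e2 + e1 * (e2 * q)) * e3 + (e1 * e2) * (s • (e3 * w))) * e4
      + ((e1 * e2) * e3) * (e4 * (-(p + q))) = 0 := by
  have hpe3' : ∀ c, p * (e3 * c) = e3 * (p * c) := fun c => by
    rw [← mul_assoc, hpe3, mul_assoc]
  have hqe3' : ∀ c, q * (e3 * c) = e3 * (q * c) := fun c => by
    rw [← mul_assoc, hqe3, mul_assoc]
  have hwe3' : ∀ c, w * (e3 * c) = e3 * (w * c) := fun c => by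
    rw [← mul_assoc, hwe3, mul_assoc]
  have hme4' : p * e4 = e4 * p + e4 * q - q * e4 := by
    rw [add_mul, mul_add] at hme4
    exact eq_sub_of_add_eq hme4
  rw [mul_assoc e1 p e2, hpe2, hwe2]
  simp only [mul_sub, sub_mul, mul_add, add_mul, smul_mul_assoc, mul_smul_comm, mul_assoc,
    mul_neg, neg_mul, smul_sub, smul_add]
  simp only [hpe3', hqe3', hwe3', hwe4, hme4']
  simp only [mul_sub, sub_mul, mul_add, add_mul, smul_mul_assoc, mul_smul_comm, mul_assoc,
    mul_neg, neg_mul, smul_sub, smul_add]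
  abel

private lemma key_bch {n : ℕ} (P Q : Matrix (Fin n) (Fin n) ℝ)
    (hP : Commute ⁅Q, P⁆ P) (hQ : Commute ⁅Q, P⁆ Q) :
    exp (P + Q) = exp P * exp Q * exp ((1 / 2 : ℝ) • ⁅Q, P⁆) := by
  set W := ⁅Q, P⁆ with hWdef
  set g : ℝ → Matrix (Fin n) (Fin n) ℝ := fun s =>
    exp (s • P) * exp (s • Q) * exp ((s ^ 2 / 2) • W) * exp (s • (-(P + Q)))
    with hg
  have hder : ∀ s : ℝ, HasDerivAt g 0 s := by
    intro s
    have hu : HasDerivAt (fun s : ℝ => s ^ 2 / 2) s s := by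
      simpa using (hasDerivAt_pow 2 s).div_const 2
    have h3 : HasDerivAt (fun s : ℝ => exp ((s ^ 2 / 2) • W))
        (s • (exp ((s ^ 2 / 2) • W) * W)) s :=
      (hasDerivAt_exp_smul_const W (s ^ 2 / 2)).scomp (g₁ := fun u : ℝ => exp (u • W)) s hu
    have h := (((hasDerivAt_exp_smul_const P s).mul
        (hasDerivAt_exp_smul_const Q s)).mul h3).mul
        (hasDerivAt_exp_smul_const (-(P + Q) : Matrix (Fin n) (Fin n) ℝ) s)
    refine h.congr_deriv (Eq.symm ?_)
    set E1 := exp (s • P); set E2 := exp (s • Q)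
    set E3 := exp ((s ^ 2 / 2) • W); set E4 := exp (s • (-(P + Q)))
    have hpe2 : P * E2 = E2 * P - s • (W * E2) := by
      have h0 := conj_aux Q P hQ s
      have h0' : E2 * P = P * E2 + s • (W * E2) := by
        rw [h0, add_mul, smul_mul_assoc]
      exact eq_sub_of_add_eq h0'.symm
    have hwe2 : W * E2 = E2 * W := ((hQ.smul_right s).exp_right).eq
    have hpe3 : P * E3 = E3 * P := ((hP.symm.smul_right (s ^ 2 / 2)).exp_right).eq
    have hqe3 : Q * E3 = E3 * Q := ((hQ.symm.smul_right (s ^ 2 / 2)).exp_right).eq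
    have hwe3 : W * E3 = E3 * W := (((Commute.refl W).smul_right (s ^ 2 / 2)).exp_right).eq
    have hme4 : (P + Q) * E4 = E4 * (P + Q) :=
      ((((Commute.refl (P + Q)).neg_right).smul_right s).exp_right).eq
    have hwe4 : W * E4 = E4 * W :=
      ((((hP.add_right hQ).neg_right).smul_right s).exp_right).eq
    exact (ring_aux E1 E2 E3 E4 P Q W s hpe2 hwe2 hpe3 hqe3 hwe3 hme4 hwe4).symm
  have hc : ∀ s : ℝ, g s = g 0 := fun s =>
    is_const_of_deriv_eq_zero (fun x => (hder x).differentiableAt)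
      (fun x => (hder x).deriv) s 0
  have hg0 : g 0 = 1 := by
    rw [hg]
    norm_num [exp_zero]
  have hg1 : exp P * exp Q * exp ((1 / 2 : ℝ) • W) * exp (-(P + Q)) = 1 := by
    have h1 := (hc 1).trans hg0
    rw [hg] at h1
    simp only at h1
    rw [show ((1 : ℝ) ^ 2 / 2) = (1 / 2 : ℝ) by norm_num] at h1
    simp only [one_smul] at h1
    exact h1
  calc exp (P + Q)
      = exp P * exp Q * exp ((1 / 2 : ℝ) • W) * exp (-(P + Q)) * exp (P + Q) := by
        rw [hg1, one_mul]
    _ = exp P * exp Q * exp ((1 / 2 : ℝ) • W) * (exp (-(P + Q)) * exp (P + Q)) := by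
        rw [mul_assoc]
    _ = exp P * exp Q * exp ((1 / 2 : ℝ) • W) := by rw [exp_neg_mul_exp', mul_one]

/-- The differential of the exponential map in a 2-step nilpotent matrix Lie algebra:
if `⁅X,⁅A,X⁆⁆ = 0` and `⁅A,⁅A,X⁆⁆ = 0`, then the derivative at `t = 0` of
`t ↦ exp (X + t • A)` is `exp X * (A + ½⁅A,X⁆)`. -/
theorem dexp_two_step {n : ℕ} (A X : Matrix (Fin n) (Fin n) ℝ)
    (h1 : ⁅X, ⁅A, X⁆⁆ = 0) (h2 : ⁅A, ⁅A, X⁆⁆ = 0) :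
    HasDerivAt (fun t : ℝ => NormedSpace.exp (X + t • A))
      (NormedSpace.exp X * (A + (1 / 2 : ℝ) • ⁅A, X⁆)) 0 := by
  have hXZ : Commute ⁅A, X⁆ X := (commute_iff_lie_eq.mpr h1).symm
  have hAZ : Commute ⁅A, X⁆ A := (commute_iff_lie_eq.mpr h2).symm
  set C := A + (1 / 2 : ℝ) • ⁅A, X⁆ with hC
  have hfun : ∀ t : ℝ, exp (X + t • A) = exp X * exp (t • C) := by
    intro t
    have hb : ⁅t • A, X⁆ = t • ⁅A, X⁆ := by
      simp only [Ring.lie_def, smul_mul_assoc, mul_smul_comm, smul_sub]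
    have hk := key_bch X (t • A) (hb ▸ hXZ.smul_left t)
      (hb ▸ ((hAZ.smul_left t).smul_right t))
    rw [hk, hb, mul_assoc]
    congr 1
    have hcom : Commute (t • A) ((1 / 2 : ℝ) • (t • ⁅A, X⁆)) :=
      ((hAZ.symm.smul_left t).smul_right t).smul_right (1 / 2 : ℝ)
    erw [← exp_add_of_commute hcom]
    congr 1
    rw [hC]
    module
  have hd := (hasDerivAt_exp_smul_const C (0 : ℝ)).const_mul (exp X)
  simp only [zero_smul, exp_zero, one_mul] at hd
  have heq : (fun t : ℝ => exp X * exp (t • C)) = fun t : ℝ => exp (X + t • A) :=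
    funext fun t => (hfun t).symm
  erw [heq] at hd
  exact hd
end

section
/- All central planes are homaloidal: for all z, z', z'' ∈ Z, all u ∈ U, and all x, y ∈ 𝔫, one has R(z,z')z'' = 0, R(u,x)y = 0, and R(x,y)u = 0. In particular ⟨R(z,z')z', z⟩ = 0 for all z, z' ∈ Z, so the nondegenerate part of the center is flat. -/
/-- All central planes are homaloidal: `R(z,z')z'' = R(u,x)y = R(x,y)u = 0` for all
`z, z', z'' ∈ Z`, `u ∈ U`, `x, y ∈ 𝔫`; in particular `⟨R(z,z')z', z⟩ = 0`, so the
nondegenerate part of the center is flat. -/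
theorem central_planes_homaloidal
    {n : Type*} [LieRing n] [LieAlgebra ℝ n] [FiniteDimensional ℝ n]
    (two_step : ∀ x y w : n, ⁅⁅x, y⁆, w⁆ = 0)
    (B : LinearMap.BilinForm ℝ n)
    (hB_symm : ∀ x y : n, B x y = B y x)
    (hB_nd : B.Nondegenerate)
    (adT : n → n →ₗ[ℝ] n)
    (h_adT : ∀ x y w : n, B (adT x y) w = B y ⁅x, w⁆)
    (nabla : n → n → n)
    (h_nabla : ∀ x y : n, nabla x y = (1 / 2 : ℝ) • (⁅x, y⁆ - adT x y - adT y x))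
    (R : n → n → n → n)
    (h_R : ∀ x y w : n,
      R x y w = nabla x (nabla y w) - nabla y (nabla x w) - nabla ⁅x, y⁆ w)
    -- the center `𝔷` and a Witt decomposition `𝔫 = U ⊕ Z ⊕ V ⊕ E`
    (zc U Z V E : Submodule ℝ n)
    (h_zc : ∀ a : n, a ∈ zc ↔ ∀ y : n, ⁅a, y⁆ = 0)
    (hU : U = zc ⊓ B.orthogonal zc)
    (h_internal : DirectSum.IsInternal (fun i : Fin 4 => ![U, Z, V, E] i))
    (h_center : zc = U ⊔ Z)
    (hV_null : ∀ v ∈ V, ∀ v' ∈ V, B v v' = 0)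
    (hV_perp : ∀ v ∈ V, ∀ w ∈ Z ⊔ E, B v w = 0)
    (hU_perp : ∀ u ∈ U, ∀ w ∈ Z ⊔ E, B u w = 0)
    (h_perp_UV : B.orthogonal U ⊓ B.orthogonal V = Z ⊔ E)
    (hZE : ∀ z ∈ Z, ∀ e ∈ E, B z e = 0)
    (hZ_nd : ∀ z ∈ Z, (∀ z' ∈ Z, B z z' = 0) → z = 0)
    (hE_nd : ∀ e ∈ E, (∀ e' ∈ E, B e e' = 0) → e = 0)
    (hUV_nd : (∀ u ∈ U, (∀ v ∈ V, B u v = 0) → u = 0) ∧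
              (∀ v ∈ V, (∀ u ∈ U, B u v = 0) → v = 0)) :
    (∀ z ∈ Z, ∀ z' ∈ Z, ∀ z'' ∈ Z, R z z' z'' = 0) ∧
    (∀ u ∈ U, ∀ x y : n, R u x y = 0 ∧ R x y u = 0) ∧
    (∀ z ∈ Z, ∀ z' ∈ Z, B (R z z' z') z = 0) := by
  have h0c : (0 : n) ∈ zc := (h_zc 0).2 (fun w => zero_lie w)
  have hcentT : ∀ a : n, a ∈ zc → ∀ y : n, adT a y = 0 := by
    intro a ha y
    apply hB_nd.1
    intro w
    rw [h_adT, (h_zc a).1 ha w]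
    simp
  have hbr_c : ∀ x w : n, ⁅x, w⁆ ∈ zc := fun x w => (h_zc _).2 (two_step x w)
  have hUT : ∀ u : n, u ∈ U → ∀ x : n, adT x u = 0 := by
    intro u hu x
    apply hB_nd.1
    intro w
    rw [h_adT, hB_symm]
    exact (hU ▸ hu).2 _ (hbr_c x w)
  have hZc : ∀ z : n, z ∈ Z → z ∈ zc := fun z hz => h_center ▸ Submodule.mem_sup_right hz
  have hUc : ∀ u : n, u ∈ U → u ∈ zc := fun u hu => h_center ▸ Submodule.mem_sup_left hu
  have hn0 : ∀ y : n, nabla 0 y = 0 := by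
    intro y
    rw [h_nabla, hcentT 0 h0c y, (adT y).map_zero, zero_lie]
    simp
  have hn0' : ∀ x : n, nabla x 0 = 0 := by
    intro x
    rw [h_nabla, (adT x).map_zero, hcentT 0 h0c x, lie_zero]
    simp
  have hnU : ∀ u : n, u ∈ U → ∀ x : n, nabla x u = 0 := by
    intro u hu x
    have hxu : ⁅x, u⁆ = 0 := by
      rw [← lie_skew, (h_zc u).1 (hUc u hu) x, neg_zero]
    rw [h_nabla, hUT u hu x, hcentT u (hUc u hu) x, hxu]
    simp
  have hncc : ∀ a b : n, a ∈ zc → b ∈ zc → nabla a b = 0 := by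
    intro a b ha hb
    rw [h_nabla, hcentT a ha b, hcentT b hb a, (h_zc a).1 ha b]
    simp
  have hnUl : ∀ u : n, u ∈ U → ∀ w : n, nabla u w = 0 := by
    intro u hu w
    rw [h_nabla, hcentT u (hUc u hu) w, hUT u hu w, (h_zc u).1 (hUc u hu) w]
    simp
  refine ⟨?_, ?_, ?_⟩
  · intro z hz z' hz' z'' hz''
    rw [h_R, hncc z' z'' (hZc z' hz') (hZc z'' hz''),
      hncc z z'' (hZc z hz) (hZc z'' hz''), (h_zc z).1 (hZc z hz) z',
      hn0, hn0' z, hn0' z']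
    simp
  · intro u hu x y
    constructor
    · rw [h_R, hnUl u hu (nabla x y), hnUl u hu y, (h_zc u).1 (hUc u hu) x,
        hn0, hn0' x]
      simp
    · rw [h_R, hnU u hu y, hnU u hu x, hn0' x, hn0' y, hnU u hu ⁅x, y⁆]
      simp
  · intro z hz z' hz'
    have : R z z' z' = 0 := by
      rw [h_R, hncc z' z' (hZc z' hz') (hZc z' hz'),
        hncc z z' (hZc z hz) (hZc z' hz'), (h_zc z).1 (hZc z hz) z',
        hn0, hn0' z, hn0' z']
      simp
    rw [this]
    simp
end

section
/- The center is flat: for all a, b ∈ 𝔷 one has ⟨R(a,b)b, a⟩ = 0; indeed R(a,b)c = 0 for all a, b, c ∈ 𝔷. -/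
/-- The center of a pseudoriemannian 2-step nilpotent Lie group is flat:
for all central `a, b, c` one has `R(a,b)c = 0`, and in particular
`⟨R(a,b)b, a⟩ = 0` for all central `a, b`. -/
theorem center_flat
    {n : Type*} [LieRing n] [LieAlgebra ℝ n] [FiniteDimensional ℝ n]
    -- 2-step nilpotency: the derived algebra is central
    (two_step : ∀ x y w : n, ⁅⁅x, y⁆, w⁆ = 0)
    -- a nondegenerate symmetric bilinear form (not assumed definite)
    (B : LinearMap.BilinForm ℝ n)
    (hB_symm : ∀ x y : n, B x y = B y x)
    (hB_nd : B.Nondegenerate)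
    -- `adT x` is the metric adjoint of `ad x`
    (adT : n → n →ₗ[ℝ] n)
    (h_adT : ∀ x y w : n, B (adT x y) w = B y ⁅x, w⁆)
    -- the algebraic Levi-Civita connection and its curvature tensor
    (nabla : n → n → n)
    (h_nabla : ∀ x y : n, nabla x y = (1 / 2 : ℝ) • (⁅x, y⁆ - adT x y - adT y x))
    (R : n → n → n → n)
    (h_R : ∀ x y w : n,
      R x y w = nabla x (nabla y w) - nabla y (nabla x w) - nabla ⁅x, y⁆ w) :
    (∀ a b c : n, (∀ y : n, ⁅a, y⁆ = 0) → (∀ y : n, ⁅b, y⁆ = 0) →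
        (∀ y : n, ⁅c, y⁆ = 0) → R a b c = 0) ∧
    (∀ a b : n, (∀ y : n, ⁅a, y⁆ = 0) → (∀ y : n, ⁅b, y⁆ = 0) →
        B (R a b b) a = 0) := by
  -- If `x` is central then `adT x = 0`.
  have hadT0 : ∀ x : n, (∀ y : n, ⁅x, y⁆ = 0) → ∀ y : n, adT x y = 0 := by
    intro x hx y
    apply hB_nd.1
    intro w
    rw [h_adT, hx w]
    simp
  -- `nabla` of two central elements vanishes.
  have hnab : ∀ x y : n, (∀ z : n, ⁅x, z⁆ = 0) → (∀ z : n, ⁅y, z⁆ = 0) →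
      nabla x y = 0 := by
    intro x y hx hy
    rw [h_nabla, hx y, hadT0 x hx y, hadT0 y hy x]
    simp
  have hzero : ∀ z : n, ⁅(0 : n), z⁆ = 0 := by intro z; simp
  -- `nabla x 0 = 0` for central `x`.
  have hnab0 : ∀ x : n, (∀ z : n, ⁅x, z⁆ = 0) → nabla x 0 = 0 := by
    intro x hx
    rw [h_nabla, hx 0, hadT0 x hx 0, hadT0 0 hzero x]
    simp
  have main : ∀ a b c : n, (∀ y : n, ⁅a, y⁆ = 0) → (∀ y : n, ⁅b, y⁆ = 0) →
      (∀ y : n, ⁅c, y⁆ = 0) → R a b c = 0 := by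
    intro a b c ha hb hc
    rw [h_R, hnab b c hb hc, hnab a c ha hc, hnab0 a ha, hnab0 b hb, ha b,
      hnab 0 c hzero hc]
    simp
  refine ⟨main, fun a b ha hb => ?_⟩
  rw [main a b b ha hb hb]
  simp
end

section
/- If the metric has constant curvature, it is flat: if there exists κ ∈ ℝ such that R(x,y)w = κ(⟨y,w⟩x − ⟨x,w⟩y) for all x, y, w ∈ 𝔫, then R(x,y)w = 0 for all x, y, w ∈ 𝔫. -/
/-- A 2-step nilpotent pseudoriemannian Lie group of constant curvature is flat:
if `R(x,y)w = κ(⟨y,w⟩x − ⟨x,w⟩y)` for all `x, y, w`, then `R ≡ 0`. -/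
theorem constant_curvature_flat
    {n : Type*} [LieRing n] [LieAlgebra ℝ n] [FiniteDimensional ℝ n]
    (two_step : ∀ x y w : n, ⁅⁅x, y⁆, w⁆ = 0)
    (B : LinearMap.BilinForm ℝ n)
    (hB_symm : ∀ x y : n, B x y = B y x)
    (hB_nd : B.Nondegenerate)
    (adT : n → n →ₗ[ℝ] n)
    (h_adT : ∀ x y w : n, B (adT x y) w = B y ⁅x, w⁆)
    (nabla : n → n → n)
    (h_nabla : ∀ x y : n, nabla x y = (1 / 2 : ℝ) • (⁅x, y⁆ - adT x y - adT y x))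
    (R : n → n → n → n)
    (h_R : ∀ x y w : n,
      R x y w = nabla x (nabla y w) - nabla y (nabla x w) - nabla ⁅x, y⁆ w)
    (κ : ℝ)
    (h_const : ∀ x y w : n, R x y w = κ • (B y w • x - B x w • y)) :
    ∀ x y w : n, R x y w = 0 := by
  classical
  -- basic helper lemmas about adT
  have hadT0 : ∀ y : n, adT (0 : n) y = 0 := by
    intro y
    apply hB_nd.1
    intro w
    rw [h_adT, zero_lie, map_zero]
  have hadT_smul : ∀ (c : ℝ) (v y : n), adT (c • v) y = c • adT v y := by
    intro c v y
    have h : ∀ w : n, B (adT (c • v) y - c • adT v y) w = 0 := by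
      intro w
      simp only [map_sub, LinearMap.sub_apply, map_smul, LinearMap.smul_apply,
        h_adT, smul_lie, smul_eq_mul]
      ring
    exact sub_eq_zero.mp (hB_nd.1 _ h)
  by_cases hκ : κ = 0
  · intro x y w
    rw [h_const, hκ, zero_smul]
  by_cases hab : ∀ a b : n, ⁅a, b⁆ = 0
  · -- abelian case: the connection vanishes identically
    have hadTz : ∀ a b : n, adT a b = 0 := by
      intro a b
      apply hB_nd.1
      intro w
      rw [h_adT, hab, map_zero]
    have hn : ∀ a b : n, nabla a b = 0 := by
      intro a b
      rw [h_nabla, hab, hadTz, hadTz]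
      simp
    intro x y w
    rw [h_R]
    simp [hn]
  push_neg at hab
  obtain ⟨a, b, hab0⟩ := hab
  exfalso
  -- Curvature identity P2 : for central z, κ•(Bzz•y − Byz•z) = −(1/4)•adT (adT y z) z
  have P2 : ∀ z : n, (∀ u : n, ⁅z, u⁆ = 0) → ∀ y : n,
      κ • (B z z • y - B y z • z) = (-(1/4) : ℝ) • adT (adT y z) z := by
    intro z hz y
    have hzadT : ∀ u : n, adT z u = 0 := by
      intro u
      apply hB_nd.1
      intro w
      rw [h_adT, hz, map_zero]
    have hyz : ⁅y, z⁆ = 0 := by rw [← lie_skew, hz, neg_zero]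
    have e1 : nabla z z = 0 := by
      rw [h_nabla, hz, hzadT]; simp
    have e2 : nabla y z = (-(1/2) : ℝ) • adT y z := by
      rw [h_nabla, hyz, hzadT]; module
    have e3 : nabla y 0 = 0 := by
      rw [h_nabla]; simp [hadT0]
    have e4 : nabla (0 : n) z = 0 := by
      rw [h_nabla]; simp [hadT0]
    have e5 : nabla z ((-(1/2) : ℝ) • adT y z) = (1/4 : ℝ) • adT (adT y z) z := by
      rw [h_nabla, hz, hzadT, hadT_smul]
      module
    have hthis := (h_const y z z).symm.trans (h_R y z z)
    rw [e1, e3, e2, e5, hyz, e4] at hthis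
    rw [hthis]
    module
  -- Curvature identity P3 : for x, y orthogonal to all brackets,
  -- −(3/4) |⁅x,y⁆|² = κ (ByyBxx − BxyByx)
  have P3 : ∀ x y : n, (∀ p q : n, B x ⁅p, q⁆ = 0) → (∀ p q : n, B y ⁅p, q⁆ = 0) →
      -(3/4 : ℝ) * B ⁅x, y⁆ ⁅x, y⁆ = κ * (B y y * B x x - B x y * B y x) := by
    intro x y hx hy
    have hAx : ∀ u : n, adT u x = 0 := by
      intro u; apply hB_nd.1; intro w; rw [h_adT]; exact hx u w
    have hAy : ∀ u : n, adT u y = 0 := by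
      intro u; apply hB_nd.1; intro w; rw [h_adT]; exact hy u w
    have hcc : ∀ u : n, ⁅⁅x, y⁆, u⁆ = 0 := two_step x y
    have hcadT : ∀ u : n, adT ⁅x, y⁆ u = 0 := by
      intro u; apply hB_nd.1; intro w; rw [h_adT, hcc, map_zero]
    have hyc : ⁅y, ⁅x, y⁆⁆ = 0 := by rw [← lie_skew, hcc, neg_zero]
    have e0 : nabla y y = 0 := by
      rw [h_nabla, lie_self, hAy y]; simp
    have e1 : nabla x y = (1/2 : ℝ) • ⁅x, y⁆ := by
      rw [h_nabla, hAy x, hAx y]; module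
    have e2 : nabla x (0 : n) = 0 := by
      rw [h_nabla]; simp [hadT0]
    have e3 : nabla y ((1/2 : ℝ) • ⁅x, y⁆) = (-(1/4) : ℝ) • adT y ⁅x, y⁆ := by
      rw [h_nabla, hadT_smul, hcadT, lie_smul, hyc, map_smul]
      module
    have e4 : nabla ⁅x, y⁆ y = (-(1/2) : ℝ) • adT y ⁅x, y⁆ := by
      rw [h_nabla, hcc, hcadT]; module
    have e5 : R x y y = (3/4 : ℝ) • adT y ⁅x, y⁆ := by
      rw [h_R, e0, e2, e1, e3, e4]; module
    have lhs : B (R x y y) x = -(3/4 : ℝ) * B ⁅x, y⁆ ⁅x, y⁆ := by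
      rw [e5, map_smul, LinearMap.smul_apply, h_adT]
      rw [show ⁅y, x⁆ = -⁅x, y⁆ by rw [← lie_skew]]
      rw [map_neg, smul_eq_mul]
      ring
    have rhs : B (R x y y) x = κ * (B y y * B x x - B x y * B y x) := by
      rw [h_const]
      simp only [map_smul, map_sub, LinearMap.smul_apply, LinearMap.sub_apply,
        smul_eq_mul]
    rw [← lhs, rhs]
  -- main case analysis
  by_cases hQ : ∀ p q r s : n, B ⁅p, q⁆ ⁅r, s⁆ = 0
  · -- Case I : all brackets are isotropic and mutually orthogonal
    have hz0c : ∀ w' : n, ⁅⁅a, b⁆, w'⁆ = 0 := two_step a b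
    have hjz : ∀ y' : n, adT y' ⁅a, b⁆ = 0 := by
      intro y'; apply hB_nd.1; intro w'; rw [h_adT]; exact hQ a b y' w'
    have hyz : ∀ y' : n, B y' ⁅a, b⁆ = 0 := by
      intro y'
      have h := P2 ⁅a, b⁆ hz0c y'
      rw [hjz y', hadT0, smul_zero, hQ a b a b, zero_smul, zero_sub,
        smul_neg, neg_eq_zero, smul_smul] at h
      rcases smul_eq_zero.mp h with h' | h'
      · rcases mul_eq_zero.mp h' with h'' | h''
        · exact absurd h'' hκ
        · exact h''
      · exact absurd h' hab0
    have : ⁅a, b⁆ = 0 := by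
      apply hB_nd.1
      intro w'
      rw [hB_symm]
      exact hyz w'
    exact hab0 this
  · -- Case II : some two brackets pair nontrivially
    push_neg at hQ
    obtain ⟨u, v, r, s, hne⟩ := hQ
    have hz1c : ∀ w' : n, ⁅⁅u, v⁆, w'⁆ = 0 := two_step u v
    have hz2c : ∀ w' : n, ⁅⁅r, s⁆, w'⁆ = 0 := two_step r s
    set ζ := ⁅u, v⁆ with hζdef
    have C2 : ∀ z' : n, (∀ w' : n, ⁅z', w'⁆ = 0) →
        κ • (B ζ ζ • z' - B z' ζ • ζ) = 0 := by
      intro z' hz'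
      have hadTz' : ∀ y' : n, adT z' y' = 0 := by
        intro y'; apply hB_nd.1; intro w'; rw [h_adT, hz', map_zero]
      have h := P2 ζ hz1c z'
      rw [hadTz' ζ, hadT0, smul_zero] at h
      exact h
    have hβ : B ζ ζ ≠ 0 := by
      intro h0
      have h := C2 ⁅r, s⁆ hz2c
      rw [h0, zero_smul, zero_sub, smul_neg, neg_eq_zero, smul_smul] at h
      rcases smul_eq_zero.mp h with h' | h'
      · rcases mul_eq_zero.mp h' with h'' | h''
        · exact hκ h''
        · rw [hB_symm] at h''; exact hne h''
      · rw [h'] at hne; simp at hne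
    set β := B ζ ζ with hβdef
    have hspan : ∀ p q : n, ⁅p, q⁆ = (β⁻¹ * B ζ ⁅p, q⁆) • ζ := by
      intro p q
      have h := C2 ⁅p, q⁆ (two_step p q)
      have h2 : β • ⁅p, q⁆ = B ⁅p, q⁆ ζ • ζ := by
        rcases smul_eq_zero.mp h with h' | h'
        · exact absurd h' hκ
        · exact sub_eq_zero.mp h'
      calc ⁅p, q⁆ = β⁻¹ • (β • ⁅p, q⁆) := by
            rw [smul_smul, inv_mul_cancel₀ hβ, one_smul]
        _ = β⁻¹ • (B ⁅p, q⁆ ζ • ζ) := by rw [h2]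
        _ = (β⁻¹ * B ζ ⁅p, q⁆) • ζ := by rw [smul_smul, hB_symm ⁅p, q⁆ ζ]
    have key : ∀ x : n, B ζ x = 0 → B x x = 0 := by
      intro x hx
      have hxζ : B x ζ = 0 := by rw [hB_symm]; exact hx
      have hxbr : ∀ p q : n, B x ⁅p, q⁆ = 0 := by
        intro p q
        rw [hspan p q, map_smul, smul_eq_mul, hxζ, mul_zero]
      have hxζlie : ⁅x, ζ⁆ = 0 := by rw [← lie_skew, hz1c, neg_zero]
      have hjxζ : B (adT x ζ) ζ = 0 := by rw [h_adT, hxζlie, map_zero]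
      have hζjx : B ζ (adT x ζ) = 0 := by rw [hB_symm]; exact hjxζ
      have hjxbr : ∀ p q : n, B (adT x ζ) ⁅p, q⁆ = 0 := by
        intro p q
        rw [hspan p q, map_smul, smul_eq_mul, hjxζ, mul_zero]
      have hp2 := P2 ζ hz1c x
      rw [hxζ, zero_smul, sub_zero] at hp2
      -- hp2 : κ • (β • x) = -(1/4) • adT (adT x ζ) ζ
      have hjj : adT (adT x ζ) ζ = (-(4*κ*β)) • x := by
        have h4 : adT (adT x ζ) ζ = (-4 : ℝ) • ((-(1/4) : ℝ) • adT (adT x ζ) ζ) := by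
          module
        rw [h4, ← hp2]
        module
      have hmain : B ζ ⁅x, adT x ζ⁆ = 4*κ*β*(B x x) := by
        have h1 : B (adT (adT x ζ) ζ) x = B ζ ⁅adT x ζ, x⁆ := h_adT _ ζ x
        have h2 : B (adT (adT x ζ) ζ) x = -(4*κ*β)*(B x x) := by
          rw [hjj, map_smul, LinearMap.smul_apply, smul_eq_mul]
        have h3 : ⁅adT x ζ, x⁆ = -⁅x, adT x ζ⁆ := by rw [← lie_skew]
        rw [h3, map_neg] at h1
        have := h1.symm.trans h2
        linarith
      have hBjj : B (adT x ζ) (adT x ζ) = 4*κ*β*(B x x) :=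
        (h_adT x ζ (adT x ζ)).trans hmain
      have hxjx : B x (adT x ζ) = 0 := by
        have h1 : B (adT x ζ) x = B ζ ⁅x, x⁆ := h_adT x ζ x
        rw [lie_self, map_zero] at h1
        rw [hB_symm]; exact h1
      have hjxx : B (adT x ζ) x = 0 := by rw [hB_symm]; exact hxjx
      have hcval : ⁅x, adT x ζ⁆ = (4*κ*(B x x)) • ζ := by
        have hsc : β⁻¹ * (4*κ*β*(B x x)) = 4*κ*(B x x) := by
          rw [show 4*κ*β*(B x x) = β*(4*κ*(B x x)) by ring, inv_mul_cancel_left₀ hβ]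
        rw [hspan x (adT x ζ), hmain, hsc]
      have hp3 := P3 x (adT x ζ) hxbr hjxbr
      rw [hcval, hBjj, hxjx, hjxx] at hp3
      simp only [map_smul, LinearMap.smul_apply, smul_eq_mul] at hp3
      -- hp3 : -(3/4)*(4κBxx*(4κBxx*β)) = κ*(4κβBxx*Bxx - 0*0)
      have h16 : (κ^2*β)*(B x x)^2 = 0 := by linear_combination (-(1/16) : ℝ) * hp3
      have hk2 : κ^2*β ≠ 0 := mul_ne_zero (pow_ne_zero 2 hκ) hβ
      have hsq : (B x x)^2 = 0 := (mul_eq_zero.mp h16).resolve_left hk2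
      exact sq_eq_zero_iff.mp hsq
    have hzero : ∀ x : n, B ζ x = 0 → x = 0 := by
      intro x hx
      apply hB_nd.1
      intro w'
      set y' := w' - (β⁻¹ * B ζ w') • ζ with hy'
      have hw'p : B ζ y' = 0 := by
        rw [hy', map_sub, map_smul, smul_eq_mul, ← hβdef]
        field_simp
        ring
      have hsum : B ζ (x + y') = 0 := by rw [map_add, hx, hw'p, add_zero]
      have h1 := key _ hx
      have h2 := key _ hw'p
      have h3 := key _ hsum
      have hexp : B (x + y') (x + y') = B x x + B x y' + (B y' x + B y' y') := by
        simp only [map_add, LinearMap.add_apply]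
        ring
      rw [hexp, h1, h2] at h3
      have hsymxy := hB_symm y' x
      have hxy' : B x y' = 0 := by linarith
      have hxζ : B x ζ = 0 := by rw [hB_symm]; exact hx
      have hw : B x w' = B x y' + (β⁻¹ * B ζ w') * B x ζ := by
        rw [hy', map_sub, map_smul, smul_eq_mul]
        ring
      rw [hw, hxy', hxζ]
      ring
    have hall : ∀ t : n, t = (β⁻¹ * B ζ t) • ζ := by
      intro t
      have h := hzero (t - (β⁻¹ * B ζ t) • ζ) (by
        rw [map_sub, map_smul, smul_eq_mul, ← hβdef]
        field_simp
        ring)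
      exact sub_eq_zero.mp h
    have hrs : ⁅r, s⁆ = 0 := by
      conv_lhs => rw [hall r, hall s]
      rw [smul_lie, lie_smul, lie_self]
      simp
    exact hne (by rw [hrs, map_zero])
end

section
/- If ⁅𝔫,𝔫⁆ ⊆ 𝔷 ∩ 𝔷^⊥ and 𝔷^⊥ ⊆ 𝔷 (i.e., the derived algebra lies in the null part U of the center and the component E of the Witt decomposition is zero), then the metric is flat: R(x,y)w = 0 for all x, y, w ∈ 𝔫. -/
/-- If the derived algebra lies in the null part `U = 𝔷 ∩ 𝔷^⊥` of the center and
`𝔷^⊥ ⊆ 𝔷` (i.e. `E = 0`), then the metric is flat: `R ≡ 0`. -/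
theorem flat_of_derived_in_null_center
    {n : Type*} [LieRing n] [LieAlgebra ℝ n] [FiniteDimensional ℝ n]
    (two_step : ∀ x y w : n, ⁅⁅x, y⁆, w⁆ = 0)
    (B : LinearMap.BilinForm ℝ n)
    (hB_symm : ∀ x y : n, B x y = B y x)
    (hB_nd : B.Nondegenerate)
    (adT : n → n →ₗ[ℝ] n)
    (h_adT : ∀ x y w : n, B (adT x y) w = B y ⁅x, w⁆)
    (nabla : n → n → n)
    (h_nabla : ∀ x y : n, nabla x y = (1 / 2 : ℝ) • (⁅x, y⁆ - adT x y - adT y x))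
    (R : n → n → n → n)
    (h_R : ∀ x y w : n,
      R x y w = nabla x (nabla y w) - nabla y (nabla x w) - nabla ⁅x, y⁆ w)
    -- the center, as a submodule
    (zc : Submodule ℝ n)
    (h_zc : ∀ a : n, a ∈ zc ↔ ∀ y : n, ⁅a, y⁆ = 0)
    -- `⁅𝔫,𝔫⁆ ⊆ 𝔷 ∩ 𝔷^⊥` and `𝔷^⊥ ⊆ 𝔷`
    (h_derived : ∀ x y : n, ⁅x, y⁆ ∈ zc ⊓ B.orthogonal zc)
    (h_E_zero : B.orthogonal zc ≤ zc) :
    ∀ x y w : n, R x y w = 0 := by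
  -- adT x y = 0 whenever all pairings vanish
  have hzero : ∀ x y : n, (∀ w : n, B y ⁅x, w⁆ = 0) → adT x y = 0 := by
    intro x y h
    exact hB_nd.1 _ (fun w => (h_adT x y w).trans (h w))
  -- brackets with a central element vanish
  have hcb : ∀ c : n, c ∈ zc → ∀ x : n, ⁅c, x⁆ = 0 := fun c hc => (h_zc c).mp hc
  have hbc : ∀ c : n, c ∈ zc → ∀ x : n, ⁅x, c⁆ = 0 := by
    intro c hc x
    rw [← lie_skew, hcb c hc x, neg_zero]
  -- adT x c = 0 for c ∈ 𝔷^⊥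
  have hadT1 : ∀ x c : n, c ∈ B.orthogonal zc → adT x c = 0 := by
    intro x c hc
    refine hzero x c (fun w => ?_)
    rw [hB_symm]
    exact hc ⁅x, w⁆ (h_derived x w).1
  -- adT c x = 0 for c ∈ 𝔷
  have hadT2 : ∀ c x : n, c ∈ zc → adT c x = 0 := by
    intro c x hc
    refine hzero c x (fun w => ?_)
    rw [hcb c hc w, map_zero]
  -- adT x y ∈ 𝔷^⊥ always
  have hadT_orth : ∀ x y : n, adT x y ∈ B.orthogonal zc := by
    intro x y m hm
    show B m (adT x y) = 0
    rw [← hB_symm, h_adT, hbc m hm, map_zero]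
  -- nabla x y ∈ 𝔷 ⊓ 𝔷^⊥ always
  have hnab : ∀ x y : n, nabla x y ∈ zc ⊓ B.orthogonal zc := by
    intro x y
    rw [h_nabla]
    have h1 : ⁅x, y⁆ - adT x y - adT y x ∈ zc ⊓ B.orthogonal zc := by
      refine Submodule.sub_mem _ (Submodule.sub_mem _ (h_derived x y) ?_) ?_
      · exact ⟨h_E_zero (hadT_orth x y), hadT_orth x y⟩
      · exact ⟨h_E_zero (hadT_orth y x), hadT_orth y x⟩
    exact Submodule.smul_mem _ _ h1
  -- nabla with a null-central second argument is 0
  have hn2 : ∀ x v : n, v ∈ zc ⊓ B.orthogonal zc → nabla x v = 0 := by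
    intro x v hv
    rw [h_nabla, hbc v hv.1 x, hadT1 x v hv.2, hadT2 v x hv.1]
    simp
  -- nabla with a null-central first argument is 0
  have hn1 : ∀ v x : n, v ∈ zc ⊓ B.orthogonal zc → nabla v x = 0 := by
    intro v x hv
    rw [h_nabla, hcb v hv.1 x, hadT2 v x hv.1]
    have : adT x v = 0 := hadT1 x v hv.2
    rw [this]
    simp
  intro x y w
  rw [h_R, hn2 x _ (hnab y w), hn2 y _ (hnab x w), hn1 _ w (h_derived x y)]
  simp
end

section
/- If e, e' ∈ E are orthonormal, i.e. ⟨e,e⟩ = ε̄ ∈ {±1}, ⟨e',e'⟩ = ε̄' ∈ {±1} and ⟨e,e'⟩ = 0, then ⟨R(e,e')e', e⟩ = −¾⟨⁅e,e'⁆,⁅e,e'⁆⟩; equivalently the sectional curvature satisfies K(e,e') = −¾ ε̄ ε̄' ⟨⁅e,e'⁆,⁅e,e'⁆⟩. -/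
/-- For orthonormal `e, e' ∈ E`, `⟨R(e,e')e', e⟩ = −¾⟨⁅e,e'⁆,⁅e,e'⁆⟩`; equivalently,
`K(e,e') = −¾ ε̄ ε̄' ⟨⁅e,e'⁆,⁅e,e'⁆⟩`. -/
theorem sectional_curvature_E
    {n : Type*} [LieRing n] [LieAlgebra ℝ n] [FiniteDimensional ℝ n]
    (two_step : ∀ x y w : n, ⁅⁅x, y⁆, w⁆ = 0)
    (B : LinearMap.BilinForm ℝ n)
    (hB_symm : ∀ x y : n, B x y = B y x)
    (hB_nd : B.Nondegenerate)
    (adT : n → n →ₗ[ℝ] n)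
    (h_adT : ∀ x y w : n, B (adT x y) w = B y ⁅x, w⁆)
    (nabla : n → n → n)
    (h_nabla : ∀ x y : n, nabla x y = (1 / 2 : ℝ) • (⁅x, y⁆ - adT x y - adT y x))
    (R : n → n → n → n)
    (h_R : ∀ x y w : n,
      R x y w = nabla x (nabla y w) - nabla y (nabla x w) - nabla ⁅x, y⁆ w)
    -- the center `𝔷` and a Witt decomposition `𝔫 = U ⊕ Z ⊕ V ⊕ E`
    (zc U Z V E : Submodule ℝ n)
    (h_zc : ∀ a : n, a ∈ zc ↔ ∀ y : n, ⁅a, y⁆ = 0)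
    (hU : U = zc ⊓ B.orthogonal zc)
    (h_internal : DirectSum.IsInternal (fun i : Fin 4 => ![U, Z, V, E] i))
    (h_center : zc = U ⊔ Z)
    (hV_null : ∀ v ∈ V, ∀ v' ∈ V, B v v' = 0)
    (hV_perp : ∀ v ∈ V, ∀ w ∈ Z ⊔ E, B v w = 0)
    (hU_perp : ∀ u ∈ U, ∀ w ∈ Z ⊔ E, B u w = 0)
    (h_perp_UV : B.orthogonal U ⊓ B.orthogonal V = Z ⊔ E)
    (hZE : ∀ z ∈ Z, ∀ e ∈ E, B z e = 0)
    (hZ_nd : ∀ z ∈ Z, (∀ z' ∈ Z, B z z' = 0) → z = 0)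
    (hE_nd : ∀ e ∈ E, (∀ e' ∈ E, B e e' = 0) → e = 0)
    (hUV_nd : (∀ u ∈ U, (∀ v ∈ V, B u v = 0) → u = 0) ∧
              (∀ v ∈ V, (∀ u ∈ U, B u v = 0) → v = 0))
    -- sectional curvature
    (K : n → n → ℝ)
    (h_K : ∀ x y : n, K x y = B (R x y y) x / (B x x * B y y - (B x y) ^ 2))
    -- orthonormal vectors `e, e' ∈ E`
    (e e' : n) (he : e ∈ E) (he' : e' ∈ E)
    (εb εb' : ℝ) (hεb : εb = 1 ∨ εb = -1) (hεb' : εb' = 1 ∨ εb' = -1)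
    (hee : B e e = εb) (he'e' : B e' e' = εb') (hee' : B e e' = 0) :
    B (R e e' e') e = -(3 / 4 : ℝ) * B ⁅e, e'⁆ ⁅e, e'⁆ ∧
    K e e' = -(3 / 4 : ℝ) * εb * εb' * B ⁅e, e'⁆ ⁅e, e'⁆ := by
  -- adT of any element whose brackets all vanish is zero
  have hadT0 : ∀ c : n, (∀ w : n, ⁅c, w⁆ = 0) → ∀ y : n, adT c y = 0 := by
    intro c hc y
    apply hB_nd.1
    intro w
    rw [h_adT, hc, map_zero]
  -- elements of E are orthogonal to the center
  have hEperp : ∀ f : n, f ∈ E → ∀ c : n, c ∈ zc → B f c = 0 := by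
    intro f hf c hc
    rw [h_center] at hc
    rcases Submodule.mem_sup.mp hc with ⟨u, hu, z, hz, rfl⟩
    have h1 : B u f = 0 := hU_perp u hu f (Submodule.mem_sup_right hf)
    have h2 : B z f = 0 := hZE z hz f hf
    rw [map_add, hB_symm f u, hB_symm f z, h1, h2, add_zero]
  -- adT x f = 0 for f ∈ E
  have hadTE : ∀ x : n, ∀ f : n, f ∈ E → adT x f = 0 := by
    intro x f hf
    apply hB_nd.1
    intro w
    rw [h_adT]
    exact hEperp f hf _ ((h_zc _).mpr (fun y => two_step x w y))
  have h1 : nabla e (nabla e' e') = 0 := by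
    have hXa : nabla e' e' = 0 := by
      rw [h_nabla, lie_self, hadTE e' e' he']
      simp
    rw [hXa, h_nabla, lie_zero, map_zero, hadT0 0 (fun w => zero_lie w) e]
    simp
  have h2 : nabla e' (nabla e e') = -((1/4 : ℝ)) • adT e' ⁅e, e'⁆ := by
    have hY : nabla e e' = (1/2 : ℝ) • ⁅e, e'⁆ := by
      rw [h_nabla, hadTE e e' he', hadTE e' e he]
      simp
    rw [hY, h_nabla]
    have hl : ⁅e', (1/2:ℝ) • ⁅e, e'⁆⁆ = 0 := by
      rw [lie_smul]
      have : ⁅e', ⁅e, e'⁆⁆ = 0 := by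
        rw [← neg_eq_zero, lie_skew, two_step]
      rw [this, smul_zero]
    have hr : adT ((1/2:ℝ) • ⁅e, e'⁆) e' = 0 :=
      hadT0 _ (fun w => by rw [smul_lie, two_step, smul_zero]) e'
    rw [hl, hr, map_smul]
    module
  have h3 : nabla ⁅e, e'⁆ e' = -((1/2 : ℝ)) • adT e' ⁅e, e'⁆ := by
    rw [h_nabla, two_step, hadT0 _ (two_step e e') e']
    module
  have hR : R e e' e' = (3/4 : ℝ) • adT e' ⁅e, e'⁆ := by
    rw [h_R, h1, h2, h3]
    module
  have hBR : B (R e e' e') e = -(3 / 4 : ℝ) * B ⁅e, e'⁆ ⁅e, e'⁆ := by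
    rw [hR, map_smul, LinearMap.smul_apply, smul_eq_mul, h_adT]
    have : ⁅e', e⁆ = -⁅e, e'⁆ := by rw [← lie_skew]
    rw [this, map_neg]
    ring
  refine ⟨hBR, ?_⟩
  rw [h_K, hBR, hee, he'e', hee']
  rcases hεb with rfl | rfl <;> rcases hεb' with rfl | rfl <;> norm_num <;> ring
end

section
/- For all z ∈ Z, v, v' ∈ V, and e ∈ E: (i) ⟨R(z,v)v, z⟩ = ¼⟨j(ιz)v, j(ιz)v⟩; (ii) ⟨R(v,e)e, v⟩ = −¾⟨⁅v,e⁆,⁅v,e⁆⟩ + ¼⟨j(ιv)e, j(ιv)e⟩; (iii) ⟨R(v,v')v', v⟩ = −¾⟨⁅v,v'⁆,⁅v,v'⁆⟩ + ½⟨j(ιv)v', j(ιv')v⟩ + ¼(⟨j(ιv')v, j(ιv')v⟩ + ⟨j(ιv)v', j(ιv)v'⟩) − ⟨j(ιv)v, j(ιv')v'⟩. -/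
/-- Sectional curvature numerators involving the null parts of a Witt decomposition:
for `z ∈ Z`, `v, v' ∈ V`, `e ∈ E`,
`⟨R(z,v)v, z⟩ = ¼⟨j(ιz)v, j(ιz)v⟩`,
`⟨R(v,e)e, v⟩ = −¾⟨⁅v,e⁆,⁅v,e⁆⟩ + ¼⟨j(ιv)e, j(ιv)e⟩`, and
`⟨R(v,v')v', v⟩ = −¾⟨⁅v,v'⁆,⁅v,v'⁆⟩ + ½⟨j(ιv)v', j(ιv')v⟩
  + ¼(⟨j(ιv')v, j(ιv')v⟩ + ⟨j(ιv)v', j(ιv)v'⟩) − ⟨j(ιv)v, j(ιv')v'⟩`. -/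
theorem sectional_curvature_numerators
    {n : Type*} [LieRing n] [LieAlgebra ℝ n] [FiniteDimensional ℝ n]
    (two_step : ∀ x y w : n, ⁅⁅x, y⁆, w⁆ = 0)
    (B : LinearMap.BilinForm ℝ n)
    (hB_symm : ∀ x y : n, B x y = B y x)
    (hB_nd : B.Nondegenerate)
    (adT : n → n →ₗ[ℝ] n)
    (h_adT : ∀ x y w : n, B (adT x y) w = B y ⁅x, w⁆)
    (nabla : n → n → n)
    (h_nabla : ∀ x y : n, nabla x y = (1 / 2 : ℝ) • (⁅x, y⁆ - adT x y - adT y x))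
    (R : n → n → n → n)
    (h_R : ∀ x y w : n,
      R x y w = nabla x (nabla y w) - nabla y (nabla x w) - nabla ⁅x, y⁆ w)
    -- the center `𝔷` and a Witt decomposition `𝔫 = U ⊕ Z ⊕ V ⊕ E`
    (zc U Z V E : Submodule ℝ n)
    (h_zc : ∀ a : n, a ∈ zc ↔ ∀ y : n, ⁅a, y⁆ = 0)
    (hU : U = zc ⊓ B.orthogonal zc)
    (h_internal : DirectSum.IsInternal (fun i : Fin 4 => ![U, Z, V, E] i))
    (h_center : zc = U ⊔ Z)
    (hV_null : ∀ v ∈ V, ∀ v' ∈ V, B v v' = 0)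
    (hV_perp : ∀ v ∈ V, ∀ w ∈ Z ⊔ E, B v w = 0)
    (hU_perp : ∀ u ∈ U, ∀ w ∈ Z ⊔ E, B u w = 0)
    (h_perp_UV : B.orthogonal U ⊓ B.orthogonal V = Z ⊔ E)
    (hZE : ∀ z ∈ Z, ∀ e ∈ E, B z e = 0)
    (hZ_nd : ∀ z ∈ Z, (∀ z' ∈ Z, B z z' = 0) → z = 0)
    (hE_nd : ∀ e ∈ E, (∀ e' ∈ E, B e e' = 0) → e = 0)
    (hUV_nd : (∀ u ∈ U, (∀ v ∈ V, B u v = 0) → u = 0) ∧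
              (∀ v ∈ V, (∀ u ∈ U, B u v = 0) → v = 0))
    -- the involution ι adapted to the Witt decomposition
    (iota : n →ₗ[ℝ] n)
    (h_iota_inv : ∀ x : n, iota (iota x) = x)
    (h_iota_U : ∀ u ∈ U, iota u ∈ V) (h_iota_V : ∀ v ∈ V, iota v ∈ U)
    (h_iota_Z : ∀ z ∈ Z, iota z ∈ Z) (h_iota_E : ∀ e ∈ E, iota e ∈ E)
    (h_iota_sa : ∀ x y : n, B (iota x) y = B x (iota y))
    (h_iota_pos : ∀ x : n, x ≠ 0 → 0 < B x (iota x))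
    -- the operator j, `j(a)x = ι(ad†ₓ(ιa))`
    (j : n → n → n)
    (h_j : ∀ a x : n, j a x = iota (adT x (iota a)))
    (z v v' e : n) (hz : z ∈ Z) (hv : v ∈ V) (hv' : v' ∈ V) (he : e ∈ E) :
    B (R z v v) z = (1 / 4 : ℝ) * B (j (iota z) v) (j (iota z) v) ∧
    B (R v e e) v = -(3 / 4 : ℝ) * B ⁅v, e⁆ ⁅v, e⁆
      + (1 / 4 : ℝ) * B (j (iota v) e) (j (iota v) e) ∧
    B (R v v' v') v = -(3 / 4 : ℝ) * B ⁅v, v'⁆ ⁅v, v'⁆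
      + (1 / 2 : ℝ) * B (j (iota v) v') (j (iota v') v)
      + (1 / 4 : ℝ) * (B (j (iota v') v) (j (iota v') v)
          + B (j (iota v) v') (j (iota v) v'))
      - B (j (iota v) v) (j (iota v') v') := by
  classical
  have hnd : ∀ m : n, (∀ w : n, B m w = 0) → m = 0 := hB_nd.1
  -- adT with central first argument is zero
  have hadTc : ∀ c : n, (∀ w : n, ⁅c, w⁆ = 0) → ∀ y : n, adT c y = 0 := by
    intro c hc y
    apply hnd
    intro w
    rw [h_adT, hc, map_zero]
  -- Koszul formula
  have hK : ∀ x u w : n, B (nabla x u) w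
      = (1/2 : ℝ) * (B ⁅x, u⁆ w - B u ⁅x, w⁆ - B x ⁅u, w⁆) := by
    intro x u w
    rw [h_nabla]
    simp only [map_smul, map_sub, LinearMap.smul_apply, LinearMap.sub_apply,
      smul_eq_mul, h_adT]
  -- general curvature formula
  have hgen : ∀ x y : n, B (R x y y) x
      = -(3/4 : ℝ) * B ⁅x, y⁆ ⁅x, y⁆
        + (1/4 : ℝ) * (B (adT x y) (adT x y) + 2 * B (adT x y) (adT y x)
            + B (adT y x) (adT y x))
        - B (adT x x) (adT y y) := by
    intro x y
    have ha : ∀ w : n, ⁅⁅x, y⁆, w⁆ = 0 := two_step x y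
    have ha' : ∀ w : n, ⁅w, ⁅x, y⁆⁆ = 0 := by
      intro w; rw [← lie_skew, ha, neg_zero]
    -- term 3
    have h3 : B (nabla ⁅x, y⁆ y) x = (1/2 : ℝ) * B ⁅x, y⁆ ⁅x, y⁆ := by
      rw [hK]
      have hyx : ⁅y, x⁆ = -⁅x, y⁆ := by rw [← lie_skew]
      rw [ha, ha, hyx]
      simp only [map_zero, LinearMap.zero_apply, map_neg]
      ring
    -- term 1
    have hyy : nabla y y = -(adT y y) := by
      rw [h_nabla, lie_self]; module
    have h1 : B (nabla x (nabla y y)) x = -(B (adT x x) (adT y y)) := by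
      rw [hyy, hK]
      have e1 : B ⁅x, -(adT y y)⁆ x = -(B (adT x x) (adT y y)) := by
        rw [lie_neg, map_neg, LinearMap.neg_apply, hB_symm, ← h_adT]
      have e2 : B x ⁅-(adT y y), x⁆ = B (adT x x) (adT y y) := by
        rw [neg_lie, ← lie_skew, neg_neg, ← h_adT]
      rw [e1, e2, lie_self, map_zero]
      ring
    -- term 2
    have h2 : B (nabla y (nabla x y)) x
        = (1/4 : ℝ) * (B ⁅x, y⁆ ⁅x, y⁆ - B (adT x y) (adT x y)
            - 2 * B (adT x y) (adT y x) - B (adT y x) (adT y x)) := by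
      rw [hK, h_nabla]
      have e3 : B ⁅y, (1/2 : ℝ) • (⁅x, y⁆ - adT x y - adT y x)⁆ x
          = (1/2 : ℝ) * (-(B (adT y x) (adT x y)) - B (adT y x) (adT y x)) := by
        rw [lie_smul, lie_sub, lie_sub, ha']
        simp only [map_smul, map_sub, LinearMap.smul_apply, LinearMap.sub_apply,
          map_zero, LinearMap.zero_apply, smul_eq_mul]
        rw [hB_symm ⁅y, adT x y⁆ x, hB_symm ⁅y, adT y x⁆ x, ← h_adT, ← h_adT]
        ring
      have e4 : B ((1/2 : ℝ) • (⁅x, y⁆ - adT x y - adT y x)) ⁅y, x⁆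
          = -((1/2 : ℝ) * B ⁅x, y⁆ ⁅x, y⁆) := by
        have hyx : ⁅y, x⁆ = -⁅x, y⁆ := by rw [← lie_skew]
        rw [hyx]
        simp only [map_smul, map_sub, LinearMap.smul_apply, LinearMap.sub_apply,
          map_neg, smul_eq_mul]
        rw [h_adT x y, h_adT y x, ha', ha']
        simp only [map_zero]
        ring
      have e5 : B y ⁅(1/2 : ℝ) • (⁅x, y⁆ - adT x y - adT y x), x⁆
          = (1/2 : ℝ) * (B (adT x y) (adT x y) + B (adT x y) (adT y x)) := by
        rw [smul_lie, sub_lie, sub_lie, ha]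
        have ep : ⁅adT x y, x⁆ = -⁅x, adT x y⁆ := by rw [← lie_skew]
        have eq' : ⁅adT y x, x⁆ = -⁅x, adT y x⁆ := by rw [← lie_skew]
        rw [ep, eq']
        simp only [map_smul, map_sub, map_neg, map_zero, smul_eq_mul]
        rw [← h_adT, ← h_adT]
        ring
      rw [e3, e4, e5, hB_symm (adT y x) (adT x y)]
      ring
    rw [h_R]
    simp only [map_sub, LinearMap.sub_apply]
    rw [h1, h2, h3]
    ring
  -- eliminating the involution from j-terms
  have hj2 : ∀ a b x y : n, B (j (iota a) x) (j (iota b) y) = B (adT x a) (adT y b) := by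
    intro a b x y
    rw [h_j, h_j, h_iota_inv, h_iota_inv, h_iota_sa, h_iota_inv]
  -- z is central
  have hzc : z ∈ zc := by rw [h_center]; exact Submodule.mem_sup_right hz
  have hz0 : ∀ y : n, ⁅z, y⁆ = 0 := (h_zc z).mp hzc
  have hadTz : ∀ y : n, adT z y = 0 := hadTc z hz0
  -- e is orthogonal to the center
  have heC : ∀ c ∈ zc, B e c = 0 := by
    intro c hc
    rw [h_center] at hc
    obtain ⟨u, hu, z', hz', rfl⟩ := Submodule.mem_sup.mp hc
    rw [map_add, hB_symm e u, hB_symm e z',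
      hU_perp u hu e (Submodule.mem_sup_right he), hZE z' hz' e he, add_zero]
  have hadTe : ∀ x : n, adT x e = 0 := by
    intro x
    apply hnd
    intro w
    rw [h_adT]
    exact heC ⁅x, w⁆ ((h_zc ⁅x, w⁆).mpr (two_step x w))
  refine ⟨?_, ?_, ?_⟩
  · rw [hgen, hj2, hz0, hadTz, hadTz]
    simp only [map_zero, LinearMap.zero_apply]
    ring
  · rw [hgen, hj2, hadTe, hadTe]
    simp only [map_zero, LinearMap.zero_apply]
    ring
  · rw [hgen, hj2, hj2, hj2, hj2, hB_symm (adT v v') (adT v' v)]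
    ring
end

section
/- Let W be a finite-dimensional real normed vector space, J : W → W a linear map, x₁, y₁ ∈ ker J, and w₂ ∈ W. Define x(t) = t·x₁ + (exp(tJ) − I)(w₂) + ½t²·y₁. Then x(0) = 0, x'(0) = x₁ + J(w₂), and x''(t) = J(x'(t)) + y₁ for all t ∈ ℝ. -/
open NormedSpace

/-- Integration of the non-central geodesic equation: for `x₁, y₁ ∈ ker J` and
`x(t) = t x₁ + (exp(tJ) − I) w₂ + ½t² y₁`, one has `x(0) = 0`,
`x′(0) = x₁ + J w₂`, and `x″(t) = J(x′(t)) + y₁` for all `t`. -/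
theorem geodesic_equation_integration
    {W : Type*} [NormedAddCommGroup W] [NormedSpace ℝ W] [FiniteDimensional ℝ W]
    (J : W →L[ℝ] W) (x₁ y₁ w₂ : W)
    (hx₁ : J x₁ = 0) (hy₁ : J y₁ = 0)
    (x : ℝ → W)
    (hx : ∀ t : ℝ, x t = t • x₁ + (NormedSpace.exp (t • J) - 1) w₂
      + ((1 / 2 : ℝ) * t ^ 2) • y₁) :
    x 0 = 0 ∧
    HasDerivAt x (x₁ + J w₂) 0 ∧
    ∀ t : ℝ, HasDerivAt (deriv x) (J (deriv x t) + y₁) t := by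
  -- the candidate first derivative
  set v : ℝ → W := fun t => x₁ + (J * NormedSpace.exp (t • J)) w₂ + t • y₁ with hv
  have hexp : ∀ t : ℝ, HasDerivAt (fun u : ℝ => NormedSpace.exp (u • J))
      (J * NormedSpace.exp (t • J)) t := fun t => hasDerivAt_exp_smul_const' J t
  have hexp2 : ∀ t : ℝ, HasDerivAt (fun u : ℝ => J * NormedSpace.exp (u • J))
      (J * (J * NormedSpace.exp (t • J))) t := fun t => (hexp t).const_mul J
  have hd : ∀ t : ℝ, HasDerivAt x (v t) t := by
    intro t
    have h1 : HasDerivAt (fun u : ℝ => u • x₁) x₁ t := by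
      simpa using (hasDerivAt_id t).smul_const x₁
    have h2 : HasDerivAt (fun u : ℝ => (NormedSpace.exp (u • J) - 1) w₂)
        ((J * NormedSpace.exp (t • J)) w₂) t := by
      have := ((hexp t).sub_const 1).clm_apply (hasDerivAt_const t w₂)
      simpa using this
    have h3 : HasDerivAt (fun u : ℝ => ((1 / 2 : ℝ) * u ^ 2) • y₁) (t • y₁) t := by
      have hpoly : HasDerivAt (fun u : ℝ => (1 / 2 : ℝ) * u ^ 2) t t := by
        have := ((hasDerivAt_pow 2 t).const_mul (1 / 2 : ℝ))
        simpa using this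
      simpa using hpoly.smul_const y₁
    have := (h1.add h2).add h3
    exact (this.congr_deriv rfl).congr_of_eventuallyEq
      (Filter.Eventually.of_forall fun u => (hx u))
  have hderiv : deriv x = v := funext fun t => (hd t).deriv
  refine ⟨by simp [hx 0], ?_, ?_⟩
  · have := hd 0
    simpa [hv] using this
  · intro t
    rw [hderiv]
    have h1 : HasDerivAt (fun u : ℝ => (J * NormedSpace.exp (u • J)) w₂)
        ((J * (J * NormedSpace.exp (t • J))) w₂) t := by
      have := (hexp2 t).clm_apply (hasDerivAt_const t w₂)
      simpa using this
    have h2 : HasDerivAt (fun u : ℝ => u • y₁) y₁ t := by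
      simpa using (hasDerivAt_id t).smul_const y₁
    have h := ((hasDerivAt_const t x₁).add h1).add h2
    simpa [hv, hx₁, hy₁, ContinuousLinearMap.mul_apply, Pi.add_def] using h
end

section
/- Let 𝔫 be a finite-dimensional real Lie algebra, J : 𝔫 → 𝔫 a linear map, and e₁, e₂, f₂, g₂, z₀ ∈ 𝔫 with J(e₁) = 0, J(f₂) = e₂, and J(g₂) = f₂. Define e(t) = t·e₁ + (exp(tJ) − I)(f₂) and z(t) = t·z₀ − ½∫₀ᵗ ⁅e'(s), e(s)⁆ ds. Then z(t) = t·z₁(t) + z₂(t) + z₃(t) for all t ∈ ℝ, where z₁(t) = z₀ + ½⁅e₁, (exp(tJ) + I)(f₂)⁆, z₂(t) = ⁅e₁, (I − exp(tJ))(g₂)⁆ + ½⁅exp(tJ)(f₂), f₂⁆, and z₃(t) = ½∫₀ᵗ ⁅exp(sJ)(f₂), exp(sJ)(e₂)⁆ ds. -/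
open intervalIntegral MeasureTheory


/-- Closed-form integration of the central component of the geodesic equations of a
2-step nilpotent pseudoriemannian Lie group with nondegenerate center: with
`e(t) = t e₁ + (exp(tJ) − I) f₂` and `z(t) = t z₀ − ½∫₀ᵗ ⁅e′(s), e(s)⁆ ds`, one has
`z(t) = t z₁(t) + z₂(t) + z₃(t)` where `z₁, z₂, z₃` are as given. -/
theorem central_geodesic_component
    {n : Type*} [NormedAddCommGroup n] [NormedSpace ℝ n] [FiniteDimensional ℝ n]
    -- a Lie bracket on `n`
    (br : n →ₗ[ℝ] n →ₗ[ℝ] n)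
    (h_alt : ∀ x : n, br x x = 0)
    (h_jacobi : ∀ x y w : n, br x (br y w) + br y (br w x) + br w (br x y) = 0)
    (J : n →L[ℝ] n) (e₁ e₂ f₂ g₂ z₀ : n)
    (hJe₁ : J e₁ = 0) (hJf₂ : J f₂ = e₂) (hJg₂ : J g₂ = f₂)
    (e : ℝ → n)
    (h_e : ∀ t : ℝ, e t = t • e₁ + (NormedSpace.exp (t • J) - 1) f₂)
    (z : ℝ → n)
    (h_z : ∀ t : ℝ, z t = t • z₀
      - (1 / 2 : ℝ) • ∫ s in (0 : ℝ)..t, br (deriv e s) (e s))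
    (z₁ z₂ z₃ : ℝ → n)
    (h_z₁ : ∀ t : ℝ, z₁ t = z₀
      + (1 / 2 : ℝ) • br e₁ ((NormedSpace.exp (t • J) + 1) f₂))
    (h_z₂ : ∀ t : ℝ, z₂ t = br e₁ ((1 - NormedSpace.exp (t • J)) g₂)
      + (1 / 2 : ℝ) • br (NormedSpace.exp (t • J) f₂) f₂)
    (h_z₃ : ∀ t : ℝ, z₃ t = (1 / 2 : ℝ) •
      ∫ s in (0 : ℝ)..t, br (NormedSpace.exp (s • J) f₂) (NormedSpace.exp (s • J) e₂)) :
    ∀ t : ℝ, z t = t • z₁ t + z₂ t + z₃ t := by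
  intro t
  -- skew symmetry of the bracket
  have skew : ∀ x y : n, br x y = - br y x := by
    intro x y
    have h := h_alt (x + y)
    simp [map_add, LinearMap.add_apply, h_alt] at h
    -- h : br y x + br x y = 0
    have h' : br x y + br y x = 0 := by rw [add_comm]; exact h
    exact eq_neg_of_add_eq_zero_left h'
  set A : ℝ → (n →L[ℝ] n) := fun u => NormedSpace.exp (u • J) with hAdef
  -- derivative of the exponential applied to a vector
  have hAderiv : ∀ (v : n) (s : ℝ), HasDerivAt (fun u => A u v) (A s (J v)) s := by
    intro v s
    have h := hasDerivAt_exp_smul_const (𝕂 := ℝ) J s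
    have h2 := (ContinuousLinearMap.apply ℝ n v).hasFDerivAt.comp_hasDerivAt s h
    simpa [hAdef, Function.comp_def, ContinuousLinearMap.mul_apply] using h2
  have hAcont : ∀ v : n, Continuous fun s => A s v := fun v =>
    continuous_iff_continuousAt.2 fun s => (hAderiv v s).continuousAt
  have hA0 : A 0 = 1 := by simp [hAdef, NormedSpace.exp_zero]
  -- derivative of e
  have heq : e = fun u : ℝ => u • e₁ + (A u f₂ - f₂) := by
    funext u
    rw [h_e u]
    simp [hAdef, ContinuousLinearMap.sub_apply]
  have he' : ∀ s : ℝ, HasDerivAt e (e₁ + A s e₂) s := by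
    intro s
    rw [heq]
    have h1 : HasDerivAt (fun u : ℝ => u • e₁) ((1 : ℝ) • e₁) s :=
      (hasDerivAt_id s).smul_const e₁
    exact (h1.add ((hAderiv f₂ s).sub_const f₂)).congr_deriv (by simp [hJf₂])
  have hderiv : ∀ s : ℝ, deriv e s = e₁ + A s e₂ := fun s => (he' s).deriv
  -- continuity of bracketed curves
  have hBr : ∀ (u v : ℝ → n), Continuous u → Continuous v →
      Continuous fun s => br (u s) (v s) := by
    intro u v hu hv
    let B : n →L[ℝ] n →L[ℝ] n :=
      LinearMap.toContinuousLinearMap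
        { toFun := fun x => LinearMap.toContinuousLinearMap (br x)
          map_add' := by intro x y; ext w; simp
          map_smul' := by intro c x; ext w; simp }
    exact B.continuous₂.comp (hu.prodMk hv)
  have hecont : Continuous e := by
    rw [heq]
    exact (continuous_id.smul continuous_const).add ((hAcont f₂).sub continuous_const)
  have hdecont : Continuous fun s => deriv e s := by
    have : (fun s => deriv e s) = fun s => e₁ + A s e₂ := funext hderiv
    rw [this]
    exact continuous_const.add (hAcont e₂)
  have hInt1 : IntervalIntegrable (fun s => br (deriv e s) (e s)) volume 0 t :=
    (hBr _ _ hdecont hecont).intervalIntegrable 0 t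
  have hInt2 : IntervalIntegrable (fun s => br (A s f₂) (A s e₂)) volume 0 t :=
    (hBr _ _ (hAcont f₂) (hAcont e₂)).intervalIntegrable 0 t
  -- the closed-form antiderivative
  set g : ℝ → n := fun u => (1 / 2 : ℝ) • (u • br e₁ (A u f₂ + f₂)) +
    (br e₁ (g₂ - A u g₂) + (1 / 2 : ℝ) • br (A u f₂) f₂) with hgdef
  set F : ℝ → n := fun s =>
    (-(1 / 2) : ℝ) • (br (deriv e s) (e s) + br (A s f₂) (A s e₂)) with hFdef
  have hg : ∀ s : ℝ, HasDerivAt g (F s) s := by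
    intro s
    have L₁ := LinearMap.toContinuousLinearMap (br e₁)
    have k1 : HasDerivAt (fun u => br e₁ (A u f₂ + f₂)) (br e₁ (A s e₂)) s := by
      have h := (LinearMap.toContinuousLinearMap (br e₁)).hasFDerivAt.comp_hasDerivAt s
        ((hAderiv f₂ s).add_const f₂)
      simpa [hJf₂, Function.comp_def] using h
    have k1' : HasDerivAt (fun u : ℝ => u • br e₁ (A u f₂ + f₂))
        (s • br e₁ (A s e₂) + br e₁ (A s f₂ + f₂)) s := by
      exact ((hasDerivAt_id s).smul k1).congr_deriv (by simp)
    have k2 : HasDerivAt (fun u => br e₁ (g₂ - A u g₂)) (-(br e₁ (A s f₂))) s := by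
      have h := (LinearMap.toContinuousLinearMap (br e₁)).hasFDerivAt.comp_hasDerivAt s
        ((hasDerivAt_const s g₂).sub (hAderiv g₂ s))
      simpa [hJg₂, Function.comp_def] using h
    have k3 : HasDerivAt (fun u => br (A u f₂) f₂) (br (A s e₂) f₂) s := by
      have h := (LinearMap.toContinuousLinearMap (br.flip f₂)).hasFDerivAt.comp_hasDerivAt s
        (hAderiv f₂ s)
      simpa [hJf₂, Function.comp_def] using h
    have hD : HasDerivAt g
        ((1 / 2 : ℝ) • (s • br e₁ (A s e₂) + br e₁ (A s f₂ + f₂)) +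
          (-(br e₁ (A s f₂)) + (1 / 2 : ℝ) • br (A s e₂) f₂)) s := by
      exact (k1'.const_smul ((1:ℝ)/2)).add (k2.add (k3.const_smul ((1:ℝ)/2)))
    convert hD using 1
    have h2 : e s = s • e₁ + (A s f₂ - f₂) := by rw [heq]
    simp only [hFdef, hderiv s, h2]
    simp only [map_add, map_sub, _root_.map_smul, LinearMap.add_apply, LinearMap.sub_apply,
      LinearMap.smul_apply, h_alt]
    rw [skew (A s e₂) e₁, skew (A s e₂) (A s f₂)]
    module
  have hFint : IntervalIntegrable F volume 0 t := by
    rw [hFdef]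
    exact (hInt1.add hInt2).smul _
  have hFTC : ∫ s in (0:ℝ)..t, F s = g t := by
    have h := intervalIntegral.integral_eq_sub_of_hasDerivAt (f := g) (f' := F)
      (fun s _ => hg s) hFint
    have hg0 : g 0 = 0 := by simp [hgdef, hA0, h_alt]
    rw [h, hg0, sub_zero]
  have hsplit : (-(1/2) : ℝ) • (∫ s in (0:ℝ)..t, br (deriv e s) (e s)) +
      (-(1/2) : ℝ) • (∫ s in (0:ℝ)..t, br (A s f₂) (A s e₂)) = g t := by
    rw [← hFTC, hFdef]
    rw [intervalIntegral.integral_smul, intervalIntegral.integral_add hInt1 hInt2,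
      smul_add]
  -- Final assembly
  rw [h_z t, h_z₁ t, h_z₂ t, h_z₃ t]
  have hexp1 : (NormedSpace.exp (t • J) + 1) f₂ = A t f₂ + f₂ := by
    simp [hAdef, ContinuousLinearMap.add_apply]
  have hexp2 : ((1 : n →L[ℝ] n) - NormedSpace.exp (t • J)) g₂ = g₂ - A t g₂ := by
    simp [hAdef, ContinuousLinearMap.sub_apply]
  rw [hexp1, hexp2]
  set I₁ := ∫ s in (0:ℝ)..t, br (deriv e s) (e s) with hI₁
  set I₂ := ∫ s in (0:ℝ)..t, br (NormedSpace.exp (s • J) f₂) (NormedSpace.exp (s • J) e₂)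
    with hI₂
  have hAt : NormedSpace.exp (t • J) f₂ = A t f₂ := rfl
  rw [hAt]
  rw [hgdef] at hsplit
  -- goal: t • z₀ - (1/2) • I₁ = t • (z₀ + (1/2) • br e₁ (A t f₂ + f₂)) + (br e₁ (g₂ - A t g₂) + (1/2) • br (A t f₂) f₂) + (1/2) • I₂
  have : t • z₀ - (1/2 : ℝ) • I₁ =
      t • z₀ + ((-(1/2) : ℝ) • I₁ + (-(1/2) : ℝ) • I₂) + (1/2 : ℝ) • I₂ := by module
  rw [this, hsplit]
  simp only [smul_add]
  module
end

section
/- Assume ⁅𝔫,𝔫⁆ ⊆ U and E = 0 (the flat case). Let ω > 0, u₀ ∈ U, z₀ ∈ Z, v₀ ∈ V, and suppose ε := ⟨u₀+z₀+v₀, u₀+z₀+v₀⟩ ∈ {1, −1}. Define u* = ω·u₀ + ½ω²·ad†_{v₀}(z₀+v₀), z* = ω·z₀, and v* = ω·v₀. Then ε·ω² = 2⟨u*, v*⟩ + ⟨z*, z*⟩. (Hence every period of a periodic unit-speed geodesic of a compact quotient Γ\N is computable from log Γ.) -/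
/-- Period computation in the flat case `⁅𝔫,𝔫⁆ ⊆ U`, `E = 0`: if
`u* = ω u₀ + ½ω² ad†_{v₀}(z₀+v₀)`, `z* = ω z₀`, `v* = ω v₀`, and
`ε = ⟨u₀+z₀+v₀, u₀+z₀+v₀⟩ = ±1`, then `ε ω² = 2⟨u*,v*⟩ + ⟨z*,z*⟩`; hence the
period spectrum of a compact quotient is computable from `log Γ`. -/
theorem period_flat_case
    {n : Type*} [LieRing n] [LieAlgebra ℝ n] [FiniteDimensional ℝ n]
    (two_step : ∀ x y w : n, ⁅⁅x, y⁆, w⁆ = 0)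
    (B : LinearMap.BilinForm ℝ n)
    (hB_symm : ∀ x y : n, B x y = B y x)
    (hB_nd : B.Nondegenerate)
    (adT : n → n →ₗ[ℝ] n)
    (h_adT : ∀ x y w : n, B (adT x y) w = B y ⁅x, w⁆)
    -- the center `𝔷` and a Witt decomposition `𝔫 = U ⊕ Z ⊕ V ⊕ E`
    (zc U Z V E : Submodule ℝ n)
    (h_zc : ∀ a : n, a ∈ zc ↔ ∀ y : n, ⁅a, y⁆ = 0)
    (hU : U = zc ⊓ B.orthogonal zc)
    (h_internal : DirectSum.IsInternal (fun i : Fin 4 => ![U, Z, V, E] i))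
    (h_center : zc = U ⊔ Z)
    (hV_null : ∀ v ∈ V, ∀ v' ∈ V, B v v' = 0)
    (hV_perp : ∀ v ∈ V, ∀ w ∈ Z ⊔ E, B v w = 0)
    (hU_perp : ∀ u ∈ U, ∀ w ∈ Z ⊔ E, B u w = 0)
    (h_perp_UV : B.orthogonal U ⊓ B.orthogonal V = Z ⊔ E)
    (hZE : ∀ z ∈ Z, ∀ e ∈ E, B z e = 0)
    (hZ_nd : ∀ z ∈ Z, (∀ z' ∈ Z, B z z' = 0) → z = 0)
    (hE_nd : ∀ e ∈ E, (∀ e' ∈ E, B e e' = 0) → e = 0)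
    (hUV_nd : (∀ u ∈ U, (∀ v ∈ V, B u v = 0) → u = 0) ∧
              (∀ v ∈ V, (∀ u ∈ U, B u v = 0) → v = 0))
    -- the flat case: `⁅𝔫,𝔫⁆ ⊆ U` and `E = 0`
    (h_derived : ∀ x y : n, ⁅x, y⁆ ∈ U)
    (h_E_zero : E = ⊥)
    -- data of a translated unit-speed geodesic
    (ω : ℝ) (hω : 0 < ω)
    (u₀ z₀ v₀ : n) (hu₀ : u₀ ∈ U) (hz₀ : z₀ ∈ Z) (hv₀ : v₀ ∈ V)
    (ε : ℝ) (hε_def : ε = B (u₀ + z₀ + v₀) (u₀ + z₀ + v₀))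
    (hε : ε = 1 ∨ ε = -1)
    (ustar zstar vstar : n)
    (h_ustar : ustar = ω • u₀ + ((1 / 2 : ℝ) * ω ^ 2) • adT v₀ (z₀ + v₀))
    (h_zstar : zstar = ω • z₀)
    (h_vstar : vstar = ω • v₀) :
    ε * ω ^ 2 = 2 * B ustar vstar + B zstar zstar := by

  -- key orthogonality facts
  have hu₀zc : u₀ ∈ zc := by rw [hU] at hu₀; exact hu₀.1
  have hu₀orth : u₀ ∈ B.orthogonal zc := by rw [hU] at hu₀; exact hu₀.2
  have hUU : B u₀ u₀ = 0 := hu₀orth u₀ hu₀zc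
  have hUZ : B u₀ z₀ = 0 := hU_perp u₀ hu₀ z₀ (Submodule.mem_sup_left hz₀)
  have hZV : B z₀ v₀ = 0 := by
    rw [hB_symm]; exact hV_perp v₀ hv₀ z₀ (Submodule.mem_sup_left hz₀)
  have hVV : B v₀ v₀ = 0 := hV_null v₀ hv₀ v₀ hv₀
  have hAd1 : B (adT v₀ z₀) v₀ = 0 := by
    rw [h_adT, lie_self, LinearMap.map_zero]
  have hAd2 : B (adT v₀ v₀) v₀ = 0 := by
    rw [h_adT, lie_self, LinearMap.map_zero]
  have hε' : ε = 2 * B u₀ v₀ + B z₀ z₀ := by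
    rw [hε_def]
    simp only [map_add, LinearMap.add_apply]
    rw [hUU, hUZ, hVV, hZV, hB_symm z₀ u₀, hUZ, hB_symm v₀ u₀, hB_symm v₀ z₀,
      hZV]
    ring
  have h1 : B ustar vstar = ω ^ 2 * B u₀ v₀ := by
    rw [h_ustar, h_vstar]
    simp only [map_add, map_smul, LinearMap.add_apply, LinearMap.smul_apply,
      smul_eq_mul, hAd1, hAd2]
    ring
  have h2 : B zstar zstar = ω ^ 2 * B z₀ z₀ := by
    rw [h_zstar]
    simp only [map_smul, LinearMap.smul_apply, smul_eq_mul]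
    ring
  rw [h1, h2, hε']
  ring
end

section
/- Let ξ, a*, x* be real n×n matrices such that a* commutes with ξ and with x*, and the commutator ⁅x*,ξ⁆ commutes with each of ξ, x*, and a*. Set a' = a* + ⁅x*,ξ⁆ and let ω > 0. Then for all t ∈ ℝ: exp(a* + x*)·exp(ξ)·exp((t/ω)(a' + x*)) = exp(ξ)·exp(((t+ω)/ω)(a' + x*)). That is, the element φ = exp(a* + x*) translates the curve γ(t) = exp(ξ)·exp((t/ω)(a' + x*)) by ω. -/
open NormedSpace
open scoped Nat

variable {𝔸 : Type*} [NormedRing 𝔸] [NormedAlgebra ℝ 𝔸] [CompleteSpace 𝔸]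

lemma pow_mul_semicentral (A B C : 𝔸) (h : A * B = B * A + C) (hCA : Commute C A) :
    ∀ k : ℕ, A ^ (k + 1) * B = B * A ^ (k + 1) + (k + 1 : ℕ) • (C * A ^ k) := by
  intro k
  induction k with
  | zero => simpa using h
  | succ k ih =>
      have hAC : A * C = C * A := hCA.symm
      calc A ^ (k + 2) * B = A * (A ^ (k + 1) * B) := by rw [pow_succ', mul_assoc]
        _ = A * B * A ^ (k + 1) + (k + 1 : ℕ) • (A * (C * A ^ k)) := by
            rw [ih, mul_add, mul_smul_comm, mul_assoc]
        _ = B * A ^ (k + 2) + (C * A ^ (k + 1) + (k + 1 : ℕ) • (C * A ^ (k + 1))) := by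
            rw [h, ← mul_assoc A C, hAC, mul_assoc C A, ← pow_succ', add_mul, mul_assoc,
              ← pow_succ', add_assoc]
        _ = B * A ^ (k + 2) + (k + 2 : ℕ) • (C * A ^ (k + 1)) := by
            rw [succ_nsmul (C * A ^ (k + 1)) (k + 1)]; abel

lemma exp_mul_semicentral (A B C : 𝔸) (h : A * B = B * A + C) (hCA : Commute C A) :
    exp A * B = B * exp A + C * exp A := by
  have hsum : Summable fun n : ℕ => (n !⁻¹ : ℝ) • A ^ n := expSeries_summable' A
  have h1 : exp A * B = ∑' n : ℕ, (n !⁻¹ : ℝ) • (A ^ n * B) := by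
    rw [exp_eq_tsum (𝕂 := ℝ), ← hsum.tsum_mul_right]
    simp [smul_mul_assoc]
  have hABsum : Summable fun n : ℕ => (n !⁻¹ : ℝ) • (A ^ n * B) := by
    simpa [smul_mul_assoc] using (hsum.mul_right B)
  have hBsum : Summable fun n : ℕ => (n !⁻¹ : ℝ) • (B * A ^ n) := by
    simpa [mul_smul_comm] using (hsum.mul_left B)
  have hCsum : Summable fun n : ℕ => (n !⁻¹ : ℝ) • (C * A ^ n) := by
    simpa [mul_smul_comm] using (hsum.mul_left C)
  have hterm : ∀ n : ℕ, ((n+1) !⁻¹ : ℝ) • (A ^ (n+1) * B)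
      = ((n+1) !⁻¹ : ℝ) • (B * A ^ (n+1)) + (n !⁻¹ : ℝ) • (C * A ^ n) := by
    intro n
    rw [pow_mul_semicentral A B C h hCA n, smul_add]
    congr 1
    rw [← Nat.cast_smul_eq_nsmul ℝ (n+1) (C * A ^ n), smul_smul]
    congr 1
    have hfac : ((n+1)! : ℝ) = (n+1) * n ! := by
      push_cast [Nat.factorial_succ]; ring
    have h2 : ((n !) : ℝ) ≠ 0 := Nat.cast_ne_zero.2 (Nat.factorial_ne_zero n)
    have h1 : ((n : ℝ) + 1) ≠ 0 := by positivity
    rw [hfac]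
    push_cast
    field_simp
  rw [h1, hABsum.tsum_eq_zero_add]
  simp only [hterm]
  have hBsum' : Summable fun n : ℕ => ((n+1) !⁻¹ : ℝ) • (B * A ^ (n+1)) :=
    hBsum.comp_injective (add_left_injective 1)
  rw [hBsum'.tsum_add hCsum]
  have hB : ∑' n : ℕ, ((n+1) !⁻¹ : ℝ) • (B * A ^ (n+1))
      = B * exp A - (0 !⁻¹ : ℝ) • (B * A ^ 0) := by
    have := hBsum.tsum_eq_zero_add
    have hBexp : B * exp A = ∑' n : ℕ, (n !⁻¹ : ℝ) • (B * A ^ n) := by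
      rw [exp_eq_tsum (𝕂 := ℝ), ← hsum.tsum_mul_left]
      simp [mul_smul_comm]
    rw [hBexp, this]
    abel
  have hC : ∑' n : ℕ, (n !⁻¹ : ℝ) • (C * A ^ n) = C * exp A := by
    rw [exp_eq_tsum (𝕂 := ℝ), ← hsum.tsum_mul_left]
    simp [mul_smul_comm]
  rw [hB, hC]
  simp
  abel

lemma exp_mul_exp_semicentral (A B C : 𝔸) (h : A * B = B * A + C) (hCA : Commute C A) :
    exp A * exp B = exp (B + C) * exp A := by
  have key : exp A * B = (B + C) * exp A := by
    rw [exp_mul_semicentral A B C h hCA, add_mul]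
  have hpow : ∀ k : ℕ, exp A * B ^ k = (B + C) ^ k * exp A := by
    intro k
    induction k with
    | zero => simp
    | succ k ih =>
        rw [pow_succ, ← mul_assoc, ih, mul_assoc, key, pow_succ, ← mul_assoc, mul_assoc]
  have hsumB : Summable fun k : ℕ => (k !⁻¹ : ℝ) • B ^ k := expSeries_summable' B
  have hsumBC : Summable fun k : ℕ => (k !⁻¹ : ℝ) • (B + C) ^ k := expSeries_summable' (B + C)
  calc exp A * exp B = ∑' k : ℕ, (k !⁻¹ : ℝ) • (exp A * B ^ k) := by
        rw [exp_eq_tsum (𝕂 := ℝ), ← hsumB.tsum_mul_left]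
        simp [mul_smul_comm]
    _ = ∑' k : ℕ, (k !⁻¹ : ℝ) • ((B + C) ^ k * exp A) := by simp only [hpow]
    _ = exp (B + C) * exp A := by
        rw [exp_eq_tsum (𝕂 := ℝ), ← hsumBC.tsum_mul_right]
        simp [smul_mul_assoc]

/-- The translation identity of Proposition `tsg` in a 2-step nilpotent matrix group:
with `a′ = a* + ⁅x*,ξ⁆`, the element `φ = exp(a* + x*)` translates the curve
`γ(t) = exp(ξ)·exp((t/ω)(a′ + x*))` by `ω`. -/
theorem translates_geodesic
    {n : ℕ} (ξ astar xstar : Matrix (Fin n) (Fin n) ℝ)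
    (ha_ξ : Commute astar ξ) (ha_x : Commute astar xstar)
    (hc_ξ : Commute ⁅xstar, ξ⁆ ξ) (hc_x : Commute ⁅xstar, ξ⁆ xstar)
    (hc_a : Commute ⁅xstar, ξ⁆ astar)
    (a' : Matrix (Fin n) (Fin n) ℝ) (ha' : a' = astar + ⁅xstar, ξ⁆)
    (ω : ℝ) (hω : 0 < ω) :
    ∀ t : ℝ,
      NormedSpace.exp (astar + xstar) * NormedSpace.exp ξ *
          NormedSpace.exp ((t / ω) • (a' + xstar)) =
        NormedSpace.exp ξ * NormedSpace.exp (((t + ω) / ω) • (a' + xstar)) := by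
  letI : SeminormedRing (Matrix (Fin n) (Fin n) ℝ) := Matrix.linftyOpSemiNormedRing
  letI : NormedRing (Matrix (Fin n) (Fin n) ℝ) := Matrix.linftyOpNormedRing
  letI : NormedAlgebra ℝ (Matrix (Fin n) (Fin n) ℝ) := Matrix.linftyOpNormedAlgebra
  intro t
  set A := astar + xstar with hA
  set C := ⁅xstar, ξ⁆ with hC
  have hx : a' + xstar = A + C := by rw [ha', hA, hC]; abel
  have h : A * ξ = ξ * A + C := by
    rw [hA, hC, Ring.lie_def, add_mul, mul_add, ha_ξ.eq]; abel
  have hCA : Commute C A := hc_a.add_right hc_x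
  have key := exp_mul_exp_semicentral A ξ C h hCA
  rw [hx]
  erw [key]
  have hsplit : exp (ξ + C) = exp ξ * exp C :=
    Matrix.exp_add_of_commute _ _ hc_ξ.symm
  erw [hsplit, mul_assoc, mul_assoc]
  congr 1
  have h1 : exp C * exp A = exp (A + C) := by
    rw [add_comm A C]; exact (Matrix.exp_add_of_commute _ _ hCA).symm
  erw [← mul_assoc, h1, ← Matrix.exp_add_of_commute _ _ ((Commute.refl (A + C)).smul_right (t / ω))]
  congr 1
  have hωt : (t + ω) / ω = 1 + t / ω := by
    field_simp; ring
  rw [hωt, add_smul, one_smul]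
end

section
/- Let a ∈ 𝔷 and x ∈ 𝔫. Then ∇_{a+x}(a+x) = 0 if and only if ⟨a + x, ⁅x,y⁆⟩ = 0 for every y ∈ 𝔫. (In particular, the 1-parameter curve t ↦ exp(t(a+x)) is a geodesic of the left-invariant metric exactly when a + x is orthogonal to ⁅x,𝔫⁆.) -/
/-- For `a ∈ 𝔷` and `x ∈ 𝔫`, `∇_{a+x}(a+x) = 0` iff `a + x` is orthogonal to
`⁅x,𝔫⁆`; i.e., `t ↦ exp(t(a+x))` is a geodesic exactly when
`⟨a + x, ⁅x,y⁆⟩ = 0` for all `y`. -/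
theorem geodesic_one_param_criterion
    {n : Type*} [LieRing n] [LieAlgebra ℝ n] [FiniteDimensional ℝ n]
    (two_step : ∀ x y w : n, ⁅⁅x, y⁆, w⁆ = 0)
    (B : LinearMap.BilinForm ℝ n)
    (hB_symm : ∀ x y : n, B x y = B y x)
    (hB_nd : B.Nondegenerate)
    (adT : n → n →ₗ[ℝ] n)
    (h_adT : ∀ x y w : n, B (adT x y) w = B y ⁅x, w⁆)
    (nabla : n → n → n)
    (h_nabla : ∀ x y : n, nabla x y = (1 / 2 : ℝ) • (⁅x, y⁆ - adT x y - adT y x))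
    (a x : n) (ha : ∀ y : n, ⁅a, y⁆ = 0) :
    nabla (a + x) (a + x) = 0 ↔ ∀ y : n, B (a + x) ⁅x, y⁆ = 0 := by
  have key : nabla (a + x) (a + x) = -(adT (a + x) (a + x)) := by
    rw [h_nabla, lie_self]
    have : (0 : n) - adT (a + x) (a + x) - adT (a + x) (a + x)
        = (-2 : ℝ) • adT (a + x) (a + x) := by
      rw [zero_sub]
      module
    rw [this, smul_smul]
    norm_num
    abel
  have hbeq : ∀ w : n, B (adT (a + x) (a + x)) w = B (a + x) ⁅x, w⁆ := by
    intro w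
    rw [h_adT, add_lie, ha w, zero_add]
  rw [key, neg_eq_zero]
  constructor
  · intro h y
    rw [← hbeq y, h, map_zero, LinearMap.zero_apply]
  · intro h
    apply hB_nd.1
    intro w
    rw [hbeq w, h w]
end

section
/- Define, for x, y ∈ V ⊕ E, the base-torus curvature numerator ⟨R_B(x,y)y, x⟩ := ⟨R(x,y)y, x⟩ + ¾⟨⁅x,y⁆,⁅x,y⁆⟩. Then for all v, v' ∈ V and e, e' ∈ E: (i) ⟨R_B(v,e)e, v⟩ = ¼⟨j(ιv)e, j(ιv)e⟩; (ii) ⟨R_B(v,v')v', v⟩ = ½⟨j(ιv)v', j(ιv')v⟩ − ⟨j(ιv)v, j(ιv')v'⟩ + ¼(⟨j(ιv')v, j(ιv')v⟩ + ⟨j(ιv)v', j(ιv)v'⟩); (iii) ⟨R_B(e,e')e', e⟩ = 0. -/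
theorem RB_general
    {n : Type*} [LieRing n] [LieAlgebra ℝ n]
    (two_step : ∀ x y w : n, ⁅⁅x, y⁆, w⁆ = 0)
    (B : LinearMap.BilinForm ℝ n)
    (hB_symm : ∀ x y : n, B x y = B y x)
    (adT : n → n →ₗ[ℝ] n)
    (h_adT : ∀ x y w : n, B (adT x y) w = B y ⁅x, w⁆)
    (nabla : n → n → n)
    (h_nabla : ∀ x y : n, nabla x y = (1 / 2 : ℝ) • (⁅x, y⁆ - adT x y - adT y x))
    (R : n → n → n → n)
    (h_R : ∀ x y w : n,
      R x y w = nabla x (nabla y w) - nabla y (nabla x w) - nabla ⁅x, y⁆ w)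
    (x y : n) :
    B (R x y y) x + (3 / 4 : ℝ) * B ⁅x, y⁆ ⁅x, y⁆
      = - B (adT x x) (adT y y)
        + (1 / 2 : ℝ) * B (adT x y) (adT y x)
        + (1 / 4 : ℝ) * (B (adT x y) (adT x y) + B (adT y x) (adT y x)) := by
  have hc : ∀ w : n, ⁅(⁅x, y⁆ : n), w⁆ = 0 := two_step x y
  have hc2 : ∀ w : n, ⁅w, (⁅x, y⁆ : n)⁆ = 0 := fun w => by
    rw [← lie_skew, hc, neg_zero]
  have Bnabla : ∀ u w z : n, B (nabla u w) z
      = (1 / 2 : ℝ) * (B ⁅u, w⁆ z - B w ⁅u, z⁆ - B u ⁅w, z⁆) := by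
    intro u w z
    rw [h_nabla]
    simp only [map_smul, map_sub, LinearMap.smul_apply, LinearMap.sub_apply,
      smul_eq_mul, h_adT]
  -- T1
  have nyy : nabla y y = -(adT y y) := by
    rw [h_nabla, lie_self]; module
  have T1 : B (nabla x (nabla y y)) x = - B (adT x x) (adT y y) := by
    rw [Bnabla, nyy]
    simp only [lie_neg, neg_lie, lie_self, map_zero, map_neg, LinearMap.neg_apply,
      LinearMap.zero_apply, neg_neg, sub_zero]
    have b1 : B ⁅x, adT y y⁆ x = B (adT x x) (adT y y) := by
      rw [hB_symm, ← h_adT]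
    have b2 : B x ⁅adT y y, x⁆ = - B (adT x x) (adT y y) := by
      rw [(lie_skew (adT y y) x).symm, map_neg, ← h_adT]
    rw [b1, b2]
    ring
  -- T3
  have T3 : B (nabla ⁅x, y⁆ y) x = (1 / 2 : ℝ) * B ⁅x, y⁆ ⁅x, y⁆ := by
    rw [Bnabla, hc y, hc x]
    simp only [map_zero, LinearMap.zero_apply]
    rw [(lie_skew y x).symm, map_neg]
    ring
  -- T2
  have nxy : nabla x y = (1 / 2 : ℝ) • (⁅x, y⁆ - adT x y - adT y x) := h_nabla x y
  have T2 : B (nabla y (nabla x y)) x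
      = (1 / 4 : ℝ) * (B ⁅x, y⁆ ⁅x, y⁆ - B (adT y x) (adT x y)
          - B (adT y x) (adT y x) - B (adT x y) (adT x y)
          - B (adT x y) (adT y x)) := by
    rw [Bnabla, nxy]
    have e1 : B ⁅y, (1 / 2 : ℝ) • (⁅x, y⁆ - adT x y - adT y x)⁆ x
        = (1 / 2 : ℝ) * (0 - B ⁅y, adT x y⁆ x - B ⁅y, adT y x⁆ x) := by
      rw [lie_smul, lie_sub, lie_sub, hc2 y]
      simp only [map_smul, map_sub, LinearMap.smul_apply, LinearMap.sub_apply,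
        LinearMap.zero_apply, map_zero, smul_eq_mul]
    have e2 : B ((1 / 2 : ℝ) • (⁅x, y⁆ - adT x y - adT y x)) ⁅y, x⁆
        = (1 / 2 : ℝ) * (B ⁅x, y⁆ ⁅y, x⁆ - B (adT x y) ⁅y, x⁆ - B (adT y x) ⁅y, x⁆) := by
      simp only [map_smul, map_sub, LinearMap.smul_apply, LinearMap.sub_apply, smul_eq_mul]
    have e3 : B y ⁅(1 / 2 : ℝ) • (⁅x, y⁆ - adT x y - adT y x), x⁆
        = (1 / 2 : ℝ) * (0 - B y ⁅adT x y, x⁆ - B y ⁅adT y x, x⁆) := by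
      rw [smul_lie, sub_lie, sub_lie, hc x]
      simp only [map_smul, map_sub, smul_eq_mul, map_zero]
    rw [e1, e2, e3]
    -- atom conversions
    have a1 : B ⁅y, adT x y⁆ x = B (adT y x) (adT x y) := by
      rw [hB_symm, ← h_adT]
    have a2 : B ⁅y, adT y x⁆ x = B (adT y x) (adT y x) := by
      rw [hB_symm, ← h_adT]
    have a3 : B ⁅x, y⁆ ⁅y, x⁆ = - B ⁅x, y⁆ ⁅x, y⁆ := by
      rw [(lie_skew y x).symm, map_neg]
    have a4 : B (adT x y) ⁅y, x⁆ = 0 := by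
      rw [h_adT, (lie_skew x ⁅y, x⁆).symm,
        two_step, neg_zero, map_zero]
    have a5 : B (adT y x) ⁅y, x⁆ = 0 := by
      rw [h_adT, (lie_skew y ⁅y, x⁆).symm,
        two_step, neg_zero, map_zero]
    have a6 : B y ⁅adT x y, x⁆ = - B (adT x y) (adT x y) := by
      rw [(lie_skew (adT x y) x).symm,
        map_neg, ← h_adT]
    have a7 : B y ⁅adT y x, x⁆ = - B (adT x y) (adT y x) := by
      rw [(lie_skew (adT y x) x).symm,
        map_neg, ← h_adT]
    rw [a1, a2, a3, a4, a5, a6, a7]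
    ring
  rw [h_R]
  rw [map_sub, map_sub, LinearMap.sub_apply, LinearMap.sub_apply, T1, T2, T3]
  have hs : B (adT y x) (adT x y) = B (adT x y) (adT y x) := hB_symm _ _
  rw [hs]; ring


/-- Curvature of the base torus `T_B` via O'Neill's submersion formula
`⟨R_B(x,y)y,x⟩ = ⟨R(x,y)y,x⟩ + ¾⟨⁅x,y⁆,⁅x,y⁆⟩`: for `v, v' ∈ V` and `e, e' ∈ E`,
`⟨R_B(v,e)e, v⟩ = ¼⟨j(ιv)e, j(ιv)e⟩`,
`⟨R_B(v,v')v', v⟩ = ½⟨j(ιv)v', j(ιv')v⟩ − ⟨j(ιv)v, j(ιv')v'⟩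
  + ¼(⟨j(ιv')v, j(ιv')v⟩ + ⟨j(ιv)v', j(ιv)v'⟩)`, and
`⟨R_B(e,e')e', e⟩ = 0`. -/
theorem base_torus_curvature
    {n : Type*} [LieRing n] [LieAlgebra ℝ n] [FiniteDimensional ℝ n]
    (two_step : ∀ x y w : n, ⁅⁅x, y⁆, w⁆ = 0)
    (B : LinearMap.BilinForm ℝ n)
    (hB_symm : ∀ x y : n, B x y = B y x)
    (hB_nd : B.Nondegenerate)
    (adT : n → n →ₗ[ℝ] n)
    (h_adT : ∀ x y w : n, B (adT x y) w = B y ⁅x, w⁆)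
    (nabla : n → n → n)
    (h_nabla : ∀ x y : n, nabla x y = (1 / 2 : ℝ) • (⁅x, y⁆ - adT x y - adT y x))
    (R : n → n → n → n)
    (h_R : ∀ x y w : n,
      R x y w = nabla x (nabla y w) - nabla y (nabla x w) - nabla ⁅x, y⁆ w)
    -- the center `𝔷` and a Witt decomposition `𝔫 = U ⊕ Z ⊕ V ⊕ E`
    (zc U Z V E : Submodule ℝ n)
    (h_zc : ∀ a : n, a ∈ zc ↔ ∀ y : n, ⁅a, y⁆ = 0)
    (hU : U = zc ⊓ B.orthogonal zc)
    (h_internal : DirectSum.IsInternal (fun i : Fin 4 => ![U, Z, V, E] i))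
    (h_center : zc = U ⊔ Z)
    (hV_null : ∀ v ∈ V, ∀ v' ∈ V, B v v' = 0)
    (hV_perp : ∀ v ∈ V, ∀ w ∈ Z ⊔ E, B v w = 0)
    (hU_perp : ∀ u ∈ U, ∀ w ∈ Z ⊔ E, B u w = 0)
    (h_perp_UV : B.orthogonal U ⊓ B.orthogonal V = Z ⊔ E)
    (hZE : ∀ z ∈ Z, ∀ e ∈ E, B z e = 0)
    (hZ_nd : ∀ z ∈ Z, (∀ z' ∈ Z, B z z' = 0) → z = 0)
    (hE_nd : ∀ e ∈ E, (∀ e' ∈ E, B e e' = 0) → e = 0)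
    (hUV_nd : (∀ u ∈ U, (∀ v ∈ V, B u v = 0) → u = 0) ∧
              (∀ v ∈ V, (∀ u ∈ U, B u v = 0) → v = 0))
    -- the involution ι adapted to the Witt decomposition
    (iota : n →ₗ[ℝ] n)
    (h_iota_inv : ∀ x : n, iota (iota x) = x)
    (h_iota_U : ∀ u ∈ U, iota u ∈ V) (h_iota_V : ∀ v ∈ V, iota v ∈ U)
    (h_iota_Z : ∀ z ∈ Z, iota z ∈ Z) (h_iota_E : ∀ e ∈ E, iota e ∈ E)
    (h_iota_sa : ∀ x y : n, B (iota x) y = B x (iota y))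
    (h_iota_pos : ∀ x : n, x ≠ 0 → 0 < B x (iota x))
    -- the operator j, `j(a)x = ι(ad†ₓ(ιa))`
    (j : n → n → n)
    (h_j : ∀ a x : n, j a x = iota (adT x (iota a)))
    -- the base-torus curvature numerator
    (RBnum : n → n → ℝ)
    (h_RB : ∀ x ∈ V ⊔ E, ∀ y ∈ V ⊔ E,
      RBnum x y = B (R x y y) x + (3 / 4 : ℝ) * B ⁅x, y⁆ ⁅x, y⁆)
    (v v' e e' : n) (hv : v ∈ V) (hv' : v' ∈ V) (he : e ∈ E) (he' : e' ∈ E) :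
    RBnum v e = (1 / 4 : ℝ) * B (j (iota v) e) (j (iota v) e) ∧
    RBnum v v' = (1 / 2 : ℝ) * B (j (iota v) v') (j (iota v') v)
      - B (j (iota v) v) (j (iota v') v')
      + (1 / 4 : ℝ) * (B (j (iota v') v) (j (iota v') v)
          + B (j (iota v) v') (j (iota v) v')) ∧
    RBnum e e' = 0 := by
  -- `adT x p = 0` whenever `p ∈ E`, since `E ⊥ 𝔷 ⊇ [𝔫,𝔫]`
  have adT_E : ∀ x : n, ∀ p ∈ E, adT x p = 0 := by
    intro x p hp
    apply hB_nd.1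
    intro w
    rw [h_adT]
    have hzw : (⁅x, w⁆ : n) ∈ zc := (h_zc _).2 (fun u => two_step x w u)
    rw [h_center] at hzw
    obtain ⟨u, hu, z, hz, huz⟩ := Submodule.mem_sup.1 hzw
    rw [← huz, map_add]
    have h1 : B p u = 0 := by
      rw [hB_symm]; exact hU_perp u hu p (Submodule.mem_sup_right hp)
    have h2 : B p z = 0 := by
      rw [hB_symm]; exact hZE z hz p hp
    rw [h1, h2, add_zero]
  have Biota : ∀ p q : n, B (iota p) (iota q) = B p q := by
    intro p q; rw [h_iota_sa, h_iota_inv]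
  have gen := RB_general two_step B hB_symm adT h_adT nabla h_nabla R h_R
  refine ⟨?_, ?_, ?_⟩
  · rw [h_RB v (Submodule.mem_sup_left hv) e (Submodule.mem_sup_right he), gen v e,
      adT_E v e he, adT_E e e he]
    rw [h_j, h_iota_inv, Biota]
    simp only [map_zero, LinearMap.zero_apply]
    ring
  · rw [h_RB v (Submodule.mem_sup_left hv) v' (Submodule.mem_sup_left hv'), gen v v']
    rw [h_j, h_j, h_j, h_j, h_iota_inv, h_iota_inv, Biota, Biota, Biota, Biota]
    rw [hB_symm (adT v' v) (adT v v')]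
    ring
  · rw [h_RB e (Submodule.mem_sup_right he) e' (Submodule.mem_sup_right he'), gen e e',
      adT_E e e he, adT_E e e' he', adT_E e' e he, adT_E e' e' he']
    simp only [map_zero, LinearMap.zero_apply]
    ring
end

section
/- Fix z₀ ∈ 𝔷 and define the linear map J : 𝔫 → 𝔫 by J(x) = ad†ₓ(z₀). Then J is skewadjoint with respect to ⟨·,·⟩ (so each exp(sJ) is an isometry of ⟨·,·⟩), and for all f₂ ∈ 𝔫 with e₂ := J(f₂) and all s ∈ ℝ: ⟨⁅exp(sJ)(f₂), exp(sJ)(e₂)⁆, z₀⟩ = ⟨e₂, e₂⟩. -/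
set_option maxHeartbeats 1000000
set_option synthInstance.maxHeartbeats 400000


/-- For `z₀ ∈ 𝔷` and `J(x) = ad†ₓ(z₀)`: `J` is skewadjoint for `⟨·,·⟩` (so each
`exp(sJ)` is an isometry of `⟨·,·⟩`), and for `e₂ = J(f₂)` one has
`⟨⁅exp(sJ)f₂, exp(sJ)e₂⁆, z₀⟩ = ⟨e₂,e₂⟩` for all `s`. -/
theorem J_skewadjoint_key_identity
    {n : Type*} [NormedAddCommGroup n] [NormedSpace ℝ n] [FiniteDimensional ℝ n]
    -- a 2-step nilpotent Lie bracket on `n`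
    (br : n →ₗ[ℝ] n →ₗ[ℝ] n)
    (h_alt : ∀ x : n, br x x = 0)
    (h_jacobi : ∀ x y w : n, br x (br y w) + br y (br w x) + br w (br x y) = 0)
    (two_step : ∀ x y w : n, br (br x y) w = 0)
    -- a nondegenerate symmetric bilinear form
    (B : LinearMap.BilinForm ℝ n)
    (hB_symm : ∀ x y : n, B x y = B y x)
    (hB_nd : B.Nondegenerate)
    -- the metric adjoint of `ad`
    (adT : n → n →ₗ[ℝ] n)
    (h_adT : ∀ x y w : n, B (adT x y) w = B y (br x w))
    -- a central element `z₀` and `J(x) = ad†ₓ(z₀)`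
    (z₀ : n) (hz₀ : ∀ y : n, br z₀ y = 0)
    (J : n →L[ℝ] n) (h_J : ∀ x : n, J x = adT x z₀) :
    (∀ x y : n, B (J x) y = -(B x (J y))) ∧
    (∀ s : ℝ, ∀ x y : n,
      B (NormedSpace.exp (s • J) x) (NormedSpace.exp (s • J) y) = B x y) ∧
    (∀ f₂ e₂ : n, e₂ = J f₂ → ∀ s : ℝ,
      B (br (NormedSpace.exp (s • J) f₂) (NormedSpace.exp (s • J) e₂)) z₀
        = B e₂ e₂) := by
  -- antisymmetry of br
  have hbr_anti : ∀ x y : n, br y x = -br x y := by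
    intro x y
    have h := h_alt (x + y)
    simp only [map_add, LinearMap.add_apply, h_alt, zero_add, add_zero] at h
    exact eq_neg_of_add_eq_zero_left h
  -- key pairing
  have hJB : ∀ x w : n, B (J x) w = B z₀ (br x w) := by
    intro x w
    rw [h_J]
    exact h_adT x z₀ w
  -- skewadjoint
  have hskew : ∀ x y : n, B (J x) y = -(B x (J y)) := by
    intro x y
    rw [hJB, hB_symm x (J y), hJB, hbr_anti, map_neg]
  -- commutation of J with exp (s • J)
  have hcomm : ∀ (s : ℝ) (x : n),
      J (NormedSpace.exp (s • J) x) = NormedSpace.exp (s • J) (J x) := by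
    intro s x
    have h : Commute (NormedSpace.exp (s • J)) J :=
      Commute.exp_left ((Commute.refl J).smul_left s)
    have := congrArg (fun (T : n →L[ℝ] n) => T x) h.eq
    simpa [ContinuousLinearMap.mul_apply] using this.symm
  -- continuous version of B
  let B1 : n →ₗ[ℝ] n →L[ℝ] ℝ :=
    { toFun := fun x => LinearMap.toContinuousLinearMap (B x)
      map_add' := by intro a b; ext w; simp
      map_smul' := by intro c a; ext w; simp }
  let B' : n →L[ℝ] n →L[ℝ] ℝ := LinearMap.toContinuousLinearMap B1
  have hB' : ∀ x y : n, B' x y = B x y := fun x y => rfl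
  -- derivative of exp (t • J) x
  have hu : ∀ (x : n) (s : ℝ),
      HasDerivAt (fun t : ℝ => NormedSpace.exp (t • J) x)
        (NormedSpace.exp (s • J) (J x)) s := by
    intro x s
    have h := hasDerivAt_exp_smul_const J s
    have h2 := h.clm_apply (hasDerivAt_const s x)
    simpa [ContinuousLinearMap.mul_apply] using h2
  -- isometry
  have key : ∀ (s : ℝ) (x y : n),
      B (NormedSpace.exp (s • J) x) (NormedSpace.exp (s • J) y) = B x y := by
    intro s x y
    have hconst : ∀ t : ℝ,
        HasDerivAt (fun t : ℝ =>
          B' (NormedSpace.exp (t • J) x) (NormedSpace.exp (t • J) y)) 0 t := by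
      intro t
      have hc : HasDerivAt (fun t : ℝ => B' (NormedSpace.exp (t • J) x))
          (B' (NormedSpace.exp (t • J) (J x))) t :=
        B'.hasFDerivAt.comp_hasDerivAt t (hu x t)
      have h2 := hc.clm_apply (hu y t)
      have hz : B' (NormedSpace.exp (t • J) (J x)) (NormedSpace.exp (t • J) y)
          + B' (NormedSpace.exp (t • J) x) (NormedSpace.exp (t • J) (J y)) = 0 := by
        rw [hB', hB', ← hcomm, ← hcomm, hskew]
        ring
      simpa [hz] using h2
    have hd : Differentiable ℝ (fun t : ℝ =>
        B' (NormedSpace.exp (t • J) x) (NormedSpace.exp (t • J) y)) :=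
      fun t => (hconst t).differentiableAt
    have := is_const_of_deriv_eq_zero hd (fun t => (hconst t).deriv) s 0
    simp only [hB'] at this
    simpa [NormedSpace.exp_zero, ContinuousLinearMap.one_apply] using this
  refine ⟨hskew, key, ?_⟩
  intro f₂ e₂ he₂ s
  have h1 : B (br (NormedSpace.exp (s • J) f₂) (NormedSpace.exp (s • J) e₂)) z₀
      = B (J (NormedSpace.exp (s • J) f₂)) (NormedSpace.exp (s • J) e₂) := by
    rw [hJB, hB_symm]
  rw [h1, hcomm, ← he₂, key]
end
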